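/- arXiv:1701.04606 — 6 statements merged into one kernel-verified Lean document; each statement's English description precedes it below -/
import Mathlib

section
/- For any partition μ and any integer q, it is impossible to obtain a partition λ from μ by first removing a box of content q and then adding a horizontal domino whose two boxes have contents q−1 and q. -/
open Finset

/-- The content of a box in position `(i, j)` is `j - i`. -/
def content (b : ℕ × ℕ) : ℤ := (b.2 : ℤ) - (b.1 : ℤ)

/-- The anticontent of a box in position `(i, j)` is `i + j`. -/
def anticontent (b : ℕ × ℕ) : ℤ := (b.1 : ℤ) + (b.2 : ℤ)

/-- Two boxes are adjacent if they share a side. -/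
def BoxAdj (a b : ℕ × ℕ) : Prop :=
  (a.1 = b.1 ∧ (a.2 + 1 = b.2 ∨ b.2 + 1 = a.2)) ∨
  (a.2 = b.2 ∧ (a.1 + 1 = b.1 ∨ b.1 + 1 = a.1))

/-- A finite set of boxes is connected if any two boxes are linked by a chain of
adjacent boxes inside the set. -/
def IsConnectedBoxes (S : Finset (ℕ × ℕ)) : Prop :=
  ∀ a ∈ S, ∀ b ∈ S,
    Relation.ReflTransGen (fun x y => x ∈ S ∧ y ∈ S ∧ BoxAdj x y) a b

/-- A skew Young diagram: the difference of two Young diagrams `l ⊆ m`. -/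
def IsSkew (S : Finset (ℕ × ℕ)) : Prop :=
  ∃ l m : YoungDiagram, l ≤ m ∧ S = m.cells \ l.cells

/-- A hook: a nonempty connected skew Young diagram with no two boxes of the same content. -/
def IsHook (S : Finset (ℕ × ℕ)) : Prop :=
  IsSkew S ∧ S.Nonempty ∧ IsConnectedBoxes S ∧
    ∀ a ∈ S, ∀ b ∈ S, content a = content b → a = b

/-- Height: number of rows occupied. -/
def ht (S : Finset (ℕ × ℕ)) : ℕ := (S.image Prod.fst).card

/-- Width: number of columns occupied. -/
def wd (S : Finset (ℕ × ℕ)) : ℕ := (S.image Prod.snd).card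

/-- `m` is obtained from `l` by adding one box of content `c`. -/
def AddBoxC (l m : YoungDiagram) (c : ℤ) : Prop :=
  ∃ b : ℕ × ℕ, b ∉ l ∧ content b = c ∧ m.cells = insert b l.cells

/-- `l` is obtained from `m` by removing one box of content `c`. -/
def RemoveBoxC (m l : YoungDiagram) (c : ℤ) : Prop :=
  ∃ b : ℕ × ℕ, b ∈ m ∧ content b = c ∧ l.cells = m.cells.erase b

/-- `m` is obtained from `l` by adding a horizontal domino whose left box has
content `q − 1` (so its right box has content `q`). -/
def AddHDomino (l m : YoungDiagram) (q : ℤ) : Prop :=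
  ∃ i j : ℕ, (i, j) ∉ l ∧ (i, j + 1) ∉ l ∧ content (i, j) = q - 1 ∧
    m.cells = insert (i, j) (insert (i, j + 1) l.cells)

/-! Write `b` for the removed box and `(i, j)`, `(i, j + 1)` for the domino, so that `b` and
`(i, j + 1)` lie on the same diagonal. If `i ≤ b.1`, the box `(i, j)` lies up-left of `b`, so it
is still in `ν` and the domino cannot be added there. If `b.1 < i`, then `b` lies up-left of
`(i, j)`, so it would have to reappear in `λ`, although the domino does not cover it. -/

theorem YoungDiagram.mem_of_fst_le_of_content_le {μ : YoungDiagram} {x b : ℕ × ℕ} (hb : b ∈ μ)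
    (hfst : x.1 ≤ b.1) (hcontent : content x ≤ content b) : x ∈ μ :=
  μ.up_left_mem hfst (by unfold content at hcontent; omega) hb

/-- One cannot first remove a box of content `q` from a partition and then add a
horizontal domino with boxes of contents `q − 1` and `q`. -/
theorem no_remove_then_hdomino (μ : YoungDiagram) (q : ℤ) :
    ¬ ∃ ν lam : YoungDiagram, RemoveBoxC μ ν q ∧ AddHDomino ν lam q := by
  rintro ⟨ν, lam, ⟨b, hbμ, hb, hν⟩, i, j, hl, -, hc, hlam⟩
  have mem_ν : ∀ x, x ∈ ν ↔ x ≠ b ∧ x ∈ μ := fun x => by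
    rw [← YoungDiagram.mem_cells, hν, mem_erase, YoungDiagram.mem_cells]
  have mem_lam : ∀ x, x ∈ lam ↔ x = (i, j) ∨ x = (i, j + 1) ∨ x ∈ ν := fun x => by
    rw [← YoungDiagram.mem_cells, hlam, mem_insert, mem_insert, YoungDiagram.mem_cells]
  unfold content at hb hc
  rcases le_or_gt i b.1 with hi | hi
  · have hne : (i, j) ≠ b := by rintro rfl; omega
    have hle : content (i, j) ≤ content b := by unfold content; omega
    exact hl ((mem_ν _).2 ⟨hne, μ.mem_of_fst_le_of_content_le hbμ hi hle⟩)
  · have hb_lam : b ∈ lam := lam.up_left_mem hi.le (by omega) ((mem_lam _).2 (.inl rfl))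
    rcases (mem_lam b).1 hb_lam with rfl | rfl | hbν
    · exact hi.ne rfl
    · exact hi.ne rfl
    · exact ((mem_ν b).1 hbν).1 rfl
end

section
/- Every covering of a skew Young diagram by hooks is unique: if C and C' are two decompositions of a skew Young diagram κ into connected hooks such that in each decomposition any two hooks are either disjoint or nested, then C = C'. -/
open Finset

/-- Two hooks are disjoint if no box of one equals or shares a side with a box of the other. -/
def HooksDisjoint (γ δ : Finset (ℕ × ℕ)) : Prop :=
  ∀ a ∈ γ, ∀ b ∈ δ, a ≠ b ∧ ¬ BoxAdj a b

/-- `γ` is nested in `δ`: each lower and right side of a box of `γ` is shared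
with another box of `γ` or a box of `δ`. -/
def NestedIn (γ δ : Finset (ℕ × ℕ)) : Prop :=
  ∀ b ∈ γ, ((b.1 + 1, b.2) ∈ γ ∨ (b.1 + 1, b.2) ∈ δ) ∧
           ((b.1, b.2 + 1) ∈ γ ∨ (b.1, b.2 + 1) ∈ δ)

/-- A covering of `κ`: a decomposition of its boxes into connected hooks, any
two of which are disjoint or nested. -/
def IsCovering (κ : Finset (ℕ × ℕ)) (C : Finset (Finset (ℕ × ℕ))) : Prop :=
  (∀ γ ∈ C, IsHook γ) ∧
  (∀ γ ∈ C, γ ⊆ κ) ∧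
  (∀ b ∈ κ, ∃! γ, γ ∈ C ∧ b ∈ γ) ∧
  (∀ γ ∈ C, ∀ δ ∈ C, γ ≠ δ → HooksDisjoint γ δ ∨ NestedIn γ δ ∨ NestedIn δ γ)

/-!
Write `diagDepth κ x` for the number of diagonal steps `(i, j) ↦ (i + 1, j + 1)` one can take
from `x` before leaving `κ`. In any covering of a skew diagram, if `y` lies in a hook `γ` and
its diagonal neighbour lies in a hook `δ`, then `γ` is nested in `δ` and `δ` contains the
diagonal neighbour of every box of `γ`. Consequently two adjacent boxes lie in a common hook
exactly when their diagonal neighbours do, or when neither neighbour lies in `κ`; by induction,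
exactly when they have the same `diagDepth`. So the hooks of every covering are the connected
components of the level sets of `diagDepth κ`, which do not depend on the covering.
-/

def diagStep (b : ℕ × ℕ) : ℕ × ℕ := (b.1 + 1, b.2 + 1)

def SameHook (C : Finset (Finset (ℕ × ℕ))) (x y : ℕ × ℕ) : Prop :=
  ∃ γ ∈ C, x ∈ γ ∧ y ∈ γ

lemma SameHook.symm {C : Finset (Finset (ℕ × ℕ))} {x y : ℕ × ℕ} (h : SameHook C x y) :
    SameHook C y x :=
  let ⟨γ, hγ, hxγ, hyγ⟩ := h
  ⟨γ, hγ, hyγ, hxγ⟩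

lemma content_diagStep (b : ℕ × ℕ) : content (diagStep b) = content b := by
  simp only [content, diagStep]; push_cast; ring

lemma BoxAdj.diagStep {a b : ℕ × ℕ} (h : BoxAdj a b) : BoxAdj (diagStep a) (diagStep b) := by
  simp only [BoxAdj, _root_.diagStep] at *; omega

lemma BoxAdj.content_eq_add_one_or {a b : ℕ × ℕ} (h : BoxAdj a b) :
    content a = content b + 1 ∨ content b = content a + 1 := by
  simp only [BoxAdj, content] at *; omega

lemma exists_boxAdj_content_crossing {S : Finset (ℕ × ℕ)} (c : ℤ) {a b : ℕ × ℕ}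
    (h : Relation.ReflTransGen (fun x y => x ∈ S ∧ y ∈ S ∧ BoxAdj x y) a b)
    (ha : content a ≤ c) (hb : c < content b) :
    ∃ p ∈ S, ∃ q ∈ S, BoxAdj p q ∧ content p = c ∧ content q = c + 1 := by
  induction h with
  | refl => omega
  | @tail m b _ hmb ih =>
    by_cases hm : content m ≤ c
    · have := hmb.2.2.content_eq_add_one_or
      exact ⟨m, hmb.1, b, hmb.2.1, hmb.2.2, by omega, by omega⟩
    · exact ih (by omega)

lemma IsSkew.mem_of_le_of_le {κ : Finset (ℕ × ℕ)} (hκ : IsSkew κ) {a b c : ℕ × ℕ}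
    (ha : a ∈ κ) (hc : c ∈ κ) (hab : a ≤ b) (hbc : b ≤ c) : b ∈ κ := by
  obtain ⟨l, m, -, rfl⟩ := hκ
  simp only [mem_sdiff, YoungDiagram.mem_cells] at *
  exact ⟨m.isLowerSet hbc hc.1, fun hb => ha.2 (l.isLowerSet hab hb)⟩

namespace IsHook

variable {γ : Finset (ℕ × ℕ)} (hγ : IsHook γ)
include hγ

lemma eq_of_content_eq {a b : ℕ × ℕ} (ha : a ∈ γ) (hb : b ∈ γ) (h : content a = content b) :
    a = b :=
  hγ.2.2.2 a ha b hb h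

lemma boxAdj_of_content_eq_add_one {z w : ℕ × ℕ} (hz : z ∈ γ) (hw : w ∈ γ)
    (h : content w = content z + 1) : BoxAdj z w := by
  obtain ⟨p, hp, q, hq, hpq, hpc, hqc⟩ :=
    exists_boxAdj_content_crossing (content z) (hγ.2.2.1 z hz w hw) le_rfl (by omega)
  rwa [← hγ.eq_of_content_eq hp hz hpc, ← hγ.eq_of_content_eq hq hw (by omega)]

lemma diagStep_notMem {b : ℕ × ℕ} (hb : b ∈ γ) : diagStep b ∉ γ := fun h => by
  have := hγ.eq_of_content_eq h hb (content_diagStep b)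
  simp [diagStep, Prod.ext_iff] at this

end IsHook

lemma NestedIn.diagStep_mem {γ δ : Finset (ℕ × ℕ)} (hnest : NestedIn γ δ) (hγ : IsHook γ)
    (hδ : IsHook δ) (hdisj : Disjoint γ δ) {b : ℕ × ℕ} (hb : b ∈ γ) : diagStep b ∈ δ := by
  have hd : diagStep b ∉ γ := hγ.diagStep_notMem hb
  obtain ⟨hS | hS, hE | hE⟩ := hnest b hb
  · exact (hnest _ hE).1.resolve_left hd
  · exact (hnest _ hS).2.resolve_left hd
  · exact (hnest _ hE).1.resolve_left hd
  -- a path in `δ` from the box below `b` to the box right of `b` passes through `diagStep b`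
  obtain ⟨p, hp, q, hq, hpq, hpc, hqc⟩ := exists_boxAdj_content_crossing (content b)
    (hδ.2.2.1 _ hS _ hE) (by simp only [content]; omega) (by simp only [content]; omega)
  obtain rfl : q = (b.1, b.2 + 1) := hδ.eq_of_content_eq hq hE (by simp only [content] at *; omega)
  have hpb : p ≠ b := fun h => disjoint_left.1 hdisj hb (h ▸ hp)
  obtain ⟨p1, p2⟩ := p
  convert hp using 1
  simp only [BoxAdj, content, diagStep, ne_eq, Prod.ext_iff] at *; omega

lemma exists_diagStep_add_notMem (κ : Finset (ℕ × ℕ)) (x : ℕ × ℕ) :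
    ∃ k, (x.1 + k + 1, x.2 + k + 1) ∉ κ :=
  ⟨κ.sup Prod.fst, fun h => by have := le_sup (f := Prod.fst) h; simp only at this; omega⟩

def diagDepth (κ : Finset (ℕ × ℕ)) (x : ℕ × ℕ) : ℕ :=
  Nat.find (exists_diagStep_add_notMem κ x)

lemma diagDepth_eq_zero_iff {κ : Finset (ℕ × ℕ)} {x : ℕ × ℕ} :
    diagDepth κ x = 0 ↔ diagStep x ∉ κ :=
  Nat.find_eq_zero _

lemma diagDepth_of_diagStep_mem {κ : Finset (ℕ × ℕ)} {x : ℕ × ℕ} (hdx : diagStep x ∈ κ) :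
    diagDepth κ x = diagDepth κ (diagStep x) + 1 := by
  have hshift (n : ℕ) : (x.1 + (n + 1) + 1, x.2 + (n + 1) + 1) =
      ((diagStep x).1 + n + 1, (diagStep x).2 + n + 1) := by
    simp only [diagStep, Prod.ext_iff]; omega
  obtain ⟨n, hn⟩ := exists_diagStep_add_notMem κ (diagStep x)
  rw [diagDepth, Nat.find_comp_succ _ ⟨n, hshift n ▸ hn⟩ (not_not.2 hdx), diagDepth]
  exact congrArg (· + 1) (Nat.find_congr' (by simp only [hshift, implies_true]))

namespace IsCovering

variable {κ : Finset (ℕ × ℕ)} {C : Finset (Finset (ℕ × ℕ))} (hC : IsCovering κ C)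
include hC

lemma isHook {γ : Finset (ℕ × ℕ)} (hγ : γ ∈ C) : IsHook γ := hC.1 γ hγ

lemma mem_of_mem {γ : Finset (ℕ × ℕ)} (hγ : γ ∈ C) {z : ℕ × ℕ} (hz : z ∈ γ) : z ∈ κ :=
  hC.2.1 γ hγ hz

lemma exists_mem {z : ℕ × ℕ} (hz : z ∈ κ) : ∃ γ ∈ C, z ∈ γ :=
  (hC.2.2.1 z hz).exists

lemma eq_of_mem_of_mem {γ δ : Finset (ℕ × ℕ)} (hγ : γ ∈ C) (hδ : δ ∈ C) {z : ℕ × ℕ}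
    (hzγ : z ∈ γ) (hzδ : z ∈ δ) : γ = δ :=
  (hC.2.2.1 z (hC.mem_of_mem hγ hzγ)).unique ⟨hγ, hzγ⟩ ⟨hδ, hzδ⟩

lemma disjoint_of_ne {γ δ : Finset (ℕ × ℕ)} (hγ : γ ∈ C) (hδ : δ ∈ C) (hne : γ ≠ δ) :
    Disjoint γ δ :=
  disjoint_left.2 fun _ hzγ hzδ => hne (hC.eq_of_mem_of_mem hγ hδ hzγ hzδ)

lemma disjoint_or_nestedIn {γ δ : Finset (ℕ × ℕ)} (hγ : γ ∈ C) (hδ : δ ∈ C) (hne : γ ≠ δ) :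
    HooksDisjoint γ δ ∨ NestedIn γ δ ∨ NestedIn δ γ :=
  hC.2.2.2 γ hγ δ hδ hne

lemma diagStep_mem_of_nestedIn {γ δ : Finset (ℕ × ℕ)} (hγ : γ ∈ C) (hδ : δ ∈ C) (hne : γ ≠ δ)
    (hnest : NestedIn γ δ) {b : ℕ × ℕ} (hb : b ∈ γ) : diagStep b ∈ δ :=
  hnest.diagStep_mem (hC.isHook hγ) (hC.isHook hδ) (hC.disjoint_of_ne hγ hδ hne) hb

lemma mem_iff_sameHook {γ : Finset (ℕ × ℕ)} (hγ : γ ∈ C) {x z : ℕ × ℕ} (hx : x ∈ γ) :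
    z ∈ γ ↔ SameHook C x z :=
  ⟨fun hz => ⟨γ, hγ, hx, hz⟩, fun ⟨_, hδ, hxδ, hzδ⟩ => hC.eq_of_mem_of_mem hδ hγ hxδ hx ▸ hzδ⟩

lemma sameHook_refl {z : ℕ × ℕ} (hz : z ∈ κ) : SameHook C z z :=
  let ⟨γ, hγ, hzγ⟩ := hC.exists_mem hz
  ⟨γ, hγ, hzγ, hzγ⟩

lemma sameHook_trans {x y z : ℕ × ℕ} (hxy : SameHook C x y) (hyz : SameHook C y z) :
    SameHook C x z :=
  let ⟨γ, hγ, hxγ, hyγ⟩ := hxy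
  ⟨γ, hγ, hxγ, (hC.mem_iff_sameHook hγ hyγ).2 hyz⟩

lemma nestedIn_of_diagStep_mem (hκ : IsSkew κ) {γ δ : Finset (ℕ × ℕ)} (hγ : γ ∈ C)
    (hδ : δ ∈ C) {y : ℕ × ℕ} (hy : y ∈ γ) (hdy : diagStep y ∈ δ) : NestedIn γ δ := by
  have hγδ : γ ≠ δ := by rintro rfl; exact (hC.isHook hγ).diagStep_notMem hy hdy
  set s : ℕ × ℕ := (y.1 + 1, y.2)
  have hsy : BoxAdj y s := Or.inr ⟨rfl, Or.inl rfl⟩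
  have hsdy : BoxAdj s (diagStep y) := Or.inl ⟨rfl, Or.inl rfl⟩
  have hs : s ∈ κ := hκ.mem_of_le_of_le (hC.mem_of_mem hγ hy) (hC.mem_of_mem hδ hdy)
    (Prod.mk_le_mk.2 ⟨by omega, le_rfl⟩) (Prod.mk_le_mk.2 ⟨le_rfl, by omega⟩)
  obtain ⟨ε, hε, hsε⟩ := hC.exists_mem hs
  have hε : ε = γ ∨ ε = δ := by
    by_contra! ⟨hεγ, hεδ⟩
    rcases hC.disjoint_or_nestedIn hγ hε hεγ.symm with h | h | h
    · exact (h y hy s hsε).2 hsy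
    · exact hεδ (hC.eq_of_mem_of_mem hε hδ (hC.diagStep_mem_of_nestedIn hγ hε hεγ.symm h hy) hdy)
    · -- `diagStep s ∈ γ` has content `content y - 1` but is not adjacent to `y`
      have h' := (hC.isHook hγ).boxAdj_of_content_eq_add_one
        (hC.diagStep_mem_of_nestedIn hε hγ hεγ h hsε) hy
        (by simp only [content, diagStep, s]; omega)
      simp only [BoxAdj, diagStep, s] at h'; omega
  have hnd : ¬ HooksDisjoint γ δ := by
    rcases hε with rfl | rfl
    exacts [fun h => (h s hsε _ hdy).2 hsdy, fun h => (h y hy s hsε).2 hsy]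
  refine ((hC.disjoint_or_nestedIn hγ hδ hγδ).resolve_left hnd).resolve_right fun h => ?_
  -- otherwise `γ` would contain both `y` and `diagStep (diagStep y)`, of equal content
  have := (hC.isHook hγ).eq_of_content_eq
    (hC.diagStep_mem_of_nestedIn hδ hγ hγδ.symm h hdy) hy (by simp only [content_diagStep])
  simp only [diagStep, Prod.ext_iff] at this; omega

lemma diagStep_mem_of_sameHook (hκ : IsSkew κ) {x y : ℕ × ℕ} (hxy : SameHook C x y)
    (hdx : diagStep x ∈ κ) : diagStep y ∈ κ := by
  obtain ⟨γ, hγ, hxγ, hyγ⟩ := hxy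
  obtain ⟨δ, hδ, hdδ⟩ := hC.exists_mem hdx
  have hne : γ ≠ δ := by rintro rfl; exact (hC.isHook hγ).diagStep_notMem hxγ hdδ
  exact hC.mem_of_mem hδ
    (hC.diagStep_mem_of_nestedIn hγ hδ hne (hC.nestedIn_of_diagStep_mem hκ hγ hδ hxγ hdδ) hyγ)

lemma diagStep_mem_or_of_boxAdj {γ δ : Finset (ℕ × ℕ)} (hγ : γ ∈ C) (hδ : δ ∈ C) (hne : γ ≠ δ)
    {x y : ℕ × ℕ} (hx : x ∈ γ) (hy : y ∈ δ) (hxy : BoxAdj x y) :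
    diagStep x ∈ δ ∨ diagStep y ∈ γ := by
  rcases hC.disjoint_or_nestedIn hγ hδ hne with h | h | h
  · exact absurd hxy (h x hx y hy).2
  · exact Or.inl (hC.diagStep_mem_of_nestedIn hγ hδ hne h hx)
  · exact Or.inr (hC.diagStep_mem_of_nestedIn hδ hγ hne.symm h hy)

lemma sameHook_of_diagStep_notMem {x y : ℕ × ℕ} (hx : x ∈ κ) (hy : y ∈ κ) (hxy : BoxAdj x y)
    (hdx : diagStep x ∉ κ) (hdy : diagStep y ∉ κ) : SameHook C x y := by
  obtain ⟨γ, hγ, hxγ⟩ := hC.exists_mem hx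
  obtain ⟨δ, hδ, hyδ⟩ := hC.exists_mem hy
  refine ⟨γ, hγ, hxγ, ?_⟩
  by_contra hyγ
  rcases hC.diagStep_mem_or_of_boxAdj hγ hδ (by rintro rfl; exact hyγ hyδ) hxγ hyδ hxy with h | h
  exacts [hdx (hC.mem_of_mem hδ h), hdy (hC.mem_of_mem hγ h)]

lemma sameHook_iff_sameHook_diagStep (hκ : IsSkew κ) {x y : ℕ × ℕ} (hx : x ∈ κ) (hy : y ∈ κ)
    (hxy : BoxAdj x y) (hdx : diagStep x ∈ κ) :
    SameHook C x y ↔ SameHook C (diagStep x) (diagStep y) := by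
  constructor
  · rintro ⟨γ, hγ, hxγ, hyγ⟩
    obtain ⟨δ, hδ, hdδ⟩ := hC.exists_mem hdx
    have hne : γ ≠ δ := by rintro rfl; exact (hC.isHook hγ).diagStep_notMem hxγ hdδ
    exact ⟨δ, hδ, hdδ, hC.diagStep_mem_of_nestedIn hγ hδ hne
      (hC.nestedIn_of_diagStep_mem hκ hγ hδ hxγ hdδ) hyγ⟩
  · rintro ⟨δ, hδ, hdxδ, hdyδ⟩
    obtain ⟨γ, hγ, hxγ⟩ := hC.exists_mem hx
    obtain ⟨γ', hγ', hyγ'⟩ := hC.exists_mem hy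
    refine ⟨γ, hγ, hxγ, ?_⟩
    by_contra hyγ
    rcases hC.diagStep_mem_or_of_boxAdj hγ hγ' (by rintro rfl; exact hyγ hyγ') hxγ hyγ' hxy
      with h | h
    · exact (hC.isHook hγ').diagStep_notMem hyγ' (hC.eq_of_mem_of_mem hδ hγ' hdxδ h ▸ hdyδ)
    · exact (hC.isHook hγ).diagStep_notMem hxγ (hC.eq_of_mem_of_mem hδ hγ hdyδ h ▸ hdxδ)

lemma sameHook_iff_diagDepth_eq (hκ : IsSkew κ) {x y : ℕ × ℕ} (hx : x ∈ κ) (hy : y ∈ κ)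
    (hxy : BoxAdj x y) : SameHook C x y ↔ diagDepth κ x = diagDepth κ y := by
  by_cases hdx : diagStep x ∈ κ <;> by_cases hdy : diagStep y ∈ κ
  · rw [hC.sameHook_iff_sameHook_diagStep hκ hx hy hxy hdx,
      sameHook_iff_diagDepth_eq hκ hdx hdy hxy.diagStep,
      diagDepth_of_diagStep_mem hdx, diagDepth_of_diagStep_mem hdy, add_left_inj]
  · refine iff_of_false (fun h => hdy (hC.diagStep_mem_of_sameHook hκ h hdx)) ?_
    rw [diagDepth_eq_zero_iff.2 hdy, diagDepth_of_diagStep_mem hdx]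
    exact Nat.succ_ne_zero _
  · refine iff_of_false (fun h => hdx (hC.diagStep_mem_of_sameHook hκ h.symm hdy)) ?_
    rw [diagDepth_eq_zero_iff.2 hdx, diagDepth_of_diagStep_mem hdy]
    exact (Nat.succ_ne_zero _).symm
  · exact iff_of_true (hC.sameHook_of_diagStep_notMem hx hy hxy hdx hdy)
      (by rw [diagDepth_eq_zero_iff.2 hdx, diagDepth_eq_zero_iff.2 hdy])
termination_by diagDepth κ x
decreasing_by rw [diagDepth_of_diagStep_mem hdx]; exact Nat.lt_succ_self _

lemma sameHook_iff_reflTransGen (hκ : IsSkew κ) {x z : ℕ × ℕ} (hx : x ∈ κ) :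
    SameHook C x z ↔ Relation.ReflTransGen
      (fun a b => a ∈ κ ∧ b ∈ κ ∧ BoxAdj a b ∧ diagDepth κ a = diagDepth κ b) x z := by
  constructor
  · rintro ⟨γ, hγ, hxγ, hzγ⟩
    refine Relation.ReflTransGen.mono (fun a b hab => ?_) _ _ ((hC.isHook hγ).2.2.1 x hxγ z hzγ)
    obtain ⟨ha, hb, hab⟩ := hab
    have ha' := hC.mem_of_mem hγ ha
    have hb' := hC.mem_of_mem hγ hb
    exact ⟨ha', hb', hab, (hC.sameHook_iff_diagDepth_eq hκ ha' hb' hab).1 ⟨γ, hγ, ha, hb⟩⟩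
  · intro h
    induction h with
    | refl => exact hC.sameHook_refl hx
    | tail _ hab ih =>
      obtain ⟨ha, hb, hab, hd⟩ := hab
      exact hC.sameHook_trans ih ((hC.sameHook_iff_diagDepth_eq hκ ha hb hab).2 hd)

lemma subset_of_isCovering (hκ : IsSkew κ) {C' : Finset (Finset (ℕ × ℕ))}
    (hC' : IsCovering κ C') : C ⊆ C' := by
  intro γ hγ
  obtain ⟨x, hxγ⟩ := (hC.isHook hγ).2.1
  have hx := hC.mem_of_mem hγ hxγ
  obtain ⟨γ', hγ', hxγ'⟩ := hC'.exists_mem hx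
  convert hγ'
  ext z
  rw [hC.mem_iff_sameHook hγ hxγ, hC'.mem_iff_sameHook hγ' hxγ',
    hC.sameHook_iff_reflTransGen hκ hx, hC'.sameHook_iff_reflTransGen hκ hx]

end IsCovering

/-- A covering of a skew Young diagram by pairwise disjoint-or-nested hooks is unique. -/
theorem covering_unique (κ : Finset (ℕ × ℕ)) (hκ : IsSkew κ)
    (C C' : Finset (Finset (ℕ × ℕ)))
    (hC : IsCovering κ C) (hC' : IsCovering κ C') : C = C' :=
  (hC.subset_of_isCovering hκ hC').antisymm (hC'.subset_of_isCovering hκ hC)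
end

section
/- Let ν be a skew Young diagram and let κ be obtained from ν by adding a vertical domino (two boxes in one column, one above the other) such that no box of ν lies above or to the left of either added box. Then at most one of the skew diagrams κ and ν belongs to Γ. -/
open Finset

/-- The D-condition: the anticontent of the box of minimal content is minimal
among the anticontents of all boxes (no box strictly above the diagonal through
the minimal box). -/
def DCond (S : Finset (ℕ × ℕ)) : Prop :=
  ∀ m ∈ S, (∀ c ∈ S, content m ≤ content c) →
    ∀ b ∈ S, anticontent m ≤ anticontent b

/-- `Γ₀`: connected hooks satisfying the HW-condition and the D-condition. -/
def InGammaZero (γ : Finset (ℕ × ℕ)) : Prop :=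
  IsHook γ ∧ wd γ = ht γ + 1 ∧ DCond γ

/-- `Γ`: skew Young diagrams whose (unique) covering by pairwise
disjoint-or-nested hooks consists of hooks of `Γ₀`. -/
def InGamma (κ : Finset (ℕ × ℕ)) : Prop :=
  IsSkew κ ∧ ∃ C : Finset (Finset (ℕ × ℕ)), IsCovering κ C ∧ ∀ γ ∈ C, InGammaZero γ


/-! A skew diagram is an order-convex set of boxes, so each diagonal of constant content is a
contiguous segment. Peeling off the rim `{x | diagSucc x ∉ S}` removes exactly the hooks of the
covering that meet it, since the disjoint-or-nested condition propagates rim membership along a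
hook; what remains is again covered by `Γ₀` hooks. By induction on the number of peels, on every
maximal interval `[l, r]` of diagonals of length `> k` the lowest anticontents behave like the ends
of a `Γ₀` hook: the value at `r` is one more than the value at `l`, which is minimal on `[l, r]`.
In particular `r - l` is odd.

The domino adds a box to each of two adjacent diagonals of `ν`, and by the corner condition these
boxes are the tops of their diagonals in `κ`. Comparing the parities of maximal intervals in `κ`
and `ν` shows that the two diagonals of `ν` have the same length `n`. Then the lowest anticontents
of `κ` on the diagonal of `(i, j)` and on the diagonals to its left violate the minimality at the
left end of the maximal interval of `κ` of length `> n` through the domino. -/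

def diagSucc (x : ℕ × ℕ) : ℕ × ℕ := (x.1 + 1, x.2 + 1)

@[simp] lemma content_diagSucc (x : ℕ × ℕ) : content (diagSucc x) = content x := by
  simp [content, diagSucc]

@[simp] lemma anticontent_diagSucc (x : ℕ × ℕ) :
    anticontent (diagSucc x) = anticontent x + 2 := by
  simp [anticontent, diagSucc]; ring

lemma diagSucc_ne_self (x : ℕ × ℕ) : diagSucc x ≠ x := by
  simp [diagSucc, Prod.ext_iff]

lemma diagSucc_diagSucc_ne_self (x : ℕ × ℕ) : diagSucc (diagSucc x) ≠ x := by
  simp only [diagSucc, ne_eq, Prod.ext_iff]; omega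

lemma diagSucc_mono : Monotone diagSucc := fun _ _ h => by
  have := Prod.le_def.1 h
  exact Prod.mk_le_mk.2 ⟨by omega, by omega⟩

lemma content_below (i j : ℕ) : content (i + 1, j) = content (i, j) - 1 := by
  simp [content]; ring

lemma anticontent_below (i j : ℕ) : anticontent (i + 1, j) = anticontent (i, j) + 1 := by
  simp [anticontent]; ring

lemma eq_of_content_eq_of_anticontent_eq {u v : ℕ × ℕ} (h1 : content u = content v)
    (h2 : anticontent u = anticontent v) : u = v := by
  simp only [content, anticontent] at h1 h2
  ext <;> omega

lemma BoxAdj.symm {u v : ℕ × ℕ} (h : BoxAdj u v) : BoxAdj v u := by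
  unfold BoxAdj at *; omega

lemma BoxAdj.content_le {u v : ℕ × ℕ} (h : BoxAdj u v) : content v ≤ content u + 1 := by
  unfold BoxAdj at h; simp only [content]; omega

lemma BoxAdj.fst_le {u v : ℕ × ℕ} (h : BoxAdj u v) : (v.1 : ℤ) ≤ u.1 + 1 := by
  unfold BoxAdj at h; omega

lemma BoxAdj.snd_le {u v : ℕ × ℕ} (h : BoxAdj u v) : (v.2 : ℤ) ≤ u.2 + 1 := by
  unfold BoxAdj at h; omega

lemma BoxAdj.eq_or_eq_of_content_eq_add_one {u v : ℕ × ℕ} (h : BoxAdj u v)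
    (hc : content v = content u + 1) : v = (u.1, u.2 + 1) ∨ u = (v.1 + 1, v.2) := by
  unfold BoxAdj at h; simp only [content] at hc
  rcases h with ⟨h1, h2 | h2⟩ | ⟨h1, h2 | h2⟩
  · exact Or.inl (Prod.ext h1.symm h2.symm)
  · omega
  · omega
  · exact Or.inr (Prod.ext h2.symm h1)

theorem Set.OrdConnected.mk_mem {S : Finset (ℕ × ℕ)} (hS : (S : Set (ℕ × ℕ)).OrdConnected)
    {x z : ℕ × ℕ} (hx : x ∈ S) (hz : z ∈ S) {p q : ℕ} (hp : x.1 ≤ p ∧ p ≤ z.1)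
    (hq : x.2 ≤ q ∧ q ≤ z.2) : (p, q) ∈ S :=
  hS.out hx hz ⟨Prod.le_def.2 ⟨hp.1, hq.1⟩, Prod.le_def.2 ⟨hp.2, hq.2⟩⟩

lemma IsSkew.ordConnected {S : Finset (ℕ × ℕ)} (h : IsSkew S) :
    (S : Set (ℕ × ℕ)).OrdConnected := by
  obtain ⟨l, m, -, rfl⟩ := h
  rw [coe_sdiff, Set.sdiff_eq]
  exact m.isLowerSet.ordConnected.inter l.isLowerSet.compl.ordConnected

section Hooks

variable {S γ : Finset (ℕ × ℕ)} {a b : ℕ × ℕ}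

lemma exists_boxAdj_cross {f : ℕ × ℕ → ℤ}
    (h : Relation.ReflTransGen (fun x y => x ∈ S ∧ y ∈ S ∧ BoxAdj x y) a b) {t : ℤ}
    (ha : f a ≤ t) (hb : t < f b) :
    ∃ u ∈ S, ∃ v ∈ S, BoxAdj u v ∧ f u ≤ t ∧ t < f v := by
  induction h with
  | refl => omega
  | @tail b' c _ hstep ih =>
    by_cases hb' : t < f b'
    · exact ih hb'
    · exact ⟨b', hstep.1, c, hstep.2.1, hstep.2.2, by omega, hb⟩

lemma IsConnectedBoxes.exists_eq (hS : IsConnectedBoxes S) {f : ℕ × ℕ → ℤ}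
    (hf : ∀ u v, BoxAdj u v → f v ≤ f u + 1) (ha : a ∈ S) (hb : b ∈ S) {t : ℤ}
    (h1 : f a ≤ t) (h2 : t ≤ f b) : ∃ x ∈ S, f x = t := by
  rcases h2.lt_or_eq with h2 | rfl
  · obtain ⟨u, hu, v, -, huv, hut, htv⟩ := exists_boxAdj_cross (hS a ha b hb) h1 h2
    exact ⟨u, hu, by linarith [hf u v huv]⟩
  · exact ⟨b, hb, rfl⟩

lemma IsHook.connected (hγ : IsHook γ) : IsConnectedBoxes γ := hγ.2.2.1

lemma IsHook.eq_of_content_eq_s10 (hγ : IsHook γ) (ha : a ∈ γ) (hb : b ∈ γ)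
    (h : content a = content b) : a = b :=
  hγ.2.2.2 a ha b hb h

lemma IsHook.exists_content_eq (hγ : IsHook γ) (ha : a ∈ γ) (hb : b ∈ γ) {c : ℤ}
    (h1 : content a ≤ c) (h2 : c ≤ content b) : ∃ x ∈ γ, content x = c :=
  hγ.connected.exists_eq (fun _ _ h => h.content_le) ha hb h1 h2

lemma IsHook.eq_or_eq_of_content_eq_add_one (hγ : IsHook γ) (ha : a ∈ γ) (hb : b ∈ γ)
    (hab : content b = content a + 1) : b = (a.1, a.2 + 1) ∨ a = (b.1 + 1, b.2) := by
  obtain ⟨u, hu, v, hv, huv, hua, hvb⟩ :=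
    exists_boxAdj_cross (f := content) (hγ.connected a ha b hb) le_rfl (by omega)
  have hvu := huv.content_le
  obtain rfl := hγ.eq_of_content_eq_s10 hu ha (by omega)
  obtain rfl := hγ.eq_of_content_eq_s10 hv hb (by omega)
  exact huv.eq_or_eq_of_content_eq_add_one hab

lemma IsHook.induction_on_content (hγ : IsHook γ) {P : ℕ × ℕ → Prop} (ha : a ∈ γ) (h0 : P a)
    (hstep : ∀ x ∈ γ, ∀ y ∈ γ, content y = content x + 1 → P x → P y)
    (hb : b ∈ γ) (hab : content a ≤ content b) : P b := by
  obtain ⟨n, hn⟩ := Int.eq_ofNat_of_zero_le (sub_nonneg.2 hab)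
  induction n generalizing b with
  | zero => rwa [hγ.eq_of_content_eq_s10 hb ha (by omega)]
  | succ n ih =>
    obtain ⟨w, hw, hwc⟩ := hγ.exists_content_eq ha hb (c := content b - 1) (by omega) (by omega)
    exact hstep w hw b hb (by omega) (ih hw (by omega) (by omega))

lemma IsHook.le_of_content_le (hγ : IsHook γ) (ha : a ∈ γ) (hb : b ∈ γ)
    (h : content a ≤ content b) : a.2 ≤ b.2 ∧ b.1 ≤ a.1 :=
  hγ.induction_on_content (P := fun b => a.2 ≤ b.2 ∧ b.1 ≤ a.1) ha ⟨le_rfl, le_rfl⟩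
    (fun x hx y hy hxy ih => by
      rcases hγ.eq_or_eq_of_content_eq_add_one hx hy hxy with rfl | rfl <;>
        simp only at ih ⊢ <;> omega)
    hb h

lemma IsHook.image_snd_eq {m t : ℕ × ℕ} (hγ : IsHook γ) (hm : m ∈ γ) (ht : t ∈ γ)
    (hmin : ∀ y ∈ γ, content m ≤ content y) (hmax : ∀ y ∈ γ, content y ≤ content t) :
    γ.image Prod.snd = Icc m.2 t.2 := by
  ext q
  simp only [mem_image, mem_Icc]
  constructor
  · rintro ⟨y, hy, rfl⟩
    exact ⟨(hγ.le_of_content_le hm hy (hmin y hy)).1, (hγ.le_of_content_le hy ht (hmax y hy)).1⟩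
  · rintro ⟨h1, h2⟩
    obtain ⟨x, hx, hxq⟩ := hγ.connected.exists_eq (f := fun x => (x.2 : ℤ))
      (fun _ _ h => h.snd_le) hm ht (t := q) (by exact_mod_cast h1) (by exact_mod_cast h2)
    exact ⟨x, hx, by exact_mod_cast hxq⟩

lemma IsHook.image_fst_eq {m t : ℕ × ℕ} (hγ : IsHook γ) (hm : m ∈ γ) (ht : t ∈ γ)
    (hmin : ∀ y ∈ γ, content m ≤ content y) (hmax : ∀ y ∈ γ, content y ≤ content t) :
    γ.image Prod.fst = Icc t.1 m.1 := by
  ext p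
  simp only [mem_image, mem_Icc]
  constructor
  · rintro ⟨y, hy, rfl⟩
    exact ⟨(hγ.le_of_content_le hy ht (hmax y hy)).2, (hγ.le_of_content_le hm hy (hmin y hy)).2⟩
  · rintro ⟨h1, h2⟩
    obtain ⟨x, hx, hxp⟩ := hγ.connected.exists_eq (f := fun x => (x.1 : ℤ))
      (fun _ _ h => h.fst_le) ht hm (t := p) (by exact_mod_cast h1) (by exact_mod_cast h2)
    exact ⟨x, hx, by exact_mod_cast hxp⟩

lemma InGammaZero.anticontent_eq {m t : ℕ × ℕ} (hγ : InGammaZero γ) (hm : m ∈ γ) (htγ : t ∈ γ)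
    (hmin : ∀ y ∈ γ, content m ≤ content y) (hmax : ∀ y ∈ γ, content y ≤ content t) :
    anticontent t = anticontent m + 1 := by
  obtain ⟨hH, hwd, -⟩ := hγ
  have hmt := hH.le_of_content_le hm htγ (hmin t htγ)
  rw [wd, ht, hH.image_snd_eq hm htγ hmin hmax, hH.image_fst_eq hm htγ hmin hmax,
    Nat.card_Icc, Nat.card_Icc] at hwd
  simp only [anticontent]
  omega

end Hooks

section Coverings

variable {S : Finset (ℕ × ℕ)} {C : Finset (Finset (ℕ × ℕ))} {γ δ : Finset (ℕ × ℕ)}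
  {x y : ℕ × ℕ}

lemma IsCovering.isHook_s10 (hC : IsCovering S C) (hγ : γ ∈ C) : IsHook γ := hC.1 γ hγ

lemma IsCovering.subset (hC : IsCovering S C) (hγ : γ ∈ C) : γ ⊆ S := hC.2.1 γ hγ

lemma IsCovering.exists_mem_s10 (hC : IsCovering S C) (hx : x ∈ S) : ∃ γ ∈ C, x ∈ γ :=
  (hC.2.2.1 x hx).exists

lemma IsCovering.eq_of_mem (hC : IsCovering S C) (hγ : γ ∈ C) (hδ : δ ∈ C) (hxγ : x ∈ γ)
    (hxδ : x ∈ δ) : γ = δ :=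
  (hC.2.2.1 x (hC.subset hγ hxγ)).unique ⟨hγ, hxγ⟩ ⟨hδ, hxδ⟩

lemma IsCovering.diagSucc_mem_of_nestedIn (hC : IsCovering S C) (hγ : γ ∈ C) (hδ : δ ∈ C)
    (hne : γ ≠ δ) (hnest : NestedIn γ δ) (hx : x ∈ γ) : diagSucc x ∈ δ := by
  have hds : diagSucc x ∉ γ := fun h =>
    diagSucc_ne_self x ((hC.isHook_s10 hγ).eq_of_content_eq_s10 h hx (content_diagSucc x))
  obtain ⟨hbelow, hright⟩ := hnest x hx
  rcases hbelow with hu | hu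
  · exact (hnest _ hu).2.resolve_left hds
  rcases hright with hv | hv
  · exact (hnest _ hv).1.resolve_left hds
  -- both neighbours of `x` lie in the hook `δ`, so `δ` meets the diagonal of `x` next to them,
  -- at `diagSucc x` or at `x`
  have hH := hC.isHook_s10 hδ
  obtain ⟨y, hy, hyc⟩ := hH.exists_content_eq hu hv (c := content x)
    (by simp [content]; omega) (by simp [content])
  rcases hH.eq_or_eq_of_content_eq_add_one hu hy (by rw [hyc, content_below]; ring) with rfl | h
  · exact hy
  · obtain rfl : y = x := by
      simp only [Prod.ext_iff] at h ⊢; omega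
    exact absurd (hC.eq_of_mem hγ hδ hx hy) hne

lemma IsCovering.diagSucc_mem_or_diagSucc_mem (hC : IsCovering S C) (hγ : γ ∈ C) (hδ : δ ∈ C)
    (hne : γ ≠ δ) (hx : x ∈ γ) (hy : y ∈ δ) (hxy : BoxAdj x y) :
    diagSucc x ∈ δ ∨ diagSucc y ∈ γ := by
  rcases hC.2.2.2 γ hγ δ hδ hne with hdisj | hnest | hnest
  · exact absurd hxy (hdisj x hx y hy).2
  · exact Or.inl (hC.diagSucc_mem_of_nestedIn hγ hδ hne hnest hx)
  · exact Or.inr (hC.diagSucc_mem_of_nestedIn hδ hγ hne.symm hnest hy)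

lemma IsCovering.diagSucc_mem_of_boxAdj_diagSucc {z : ℕ × ℕ} (hC : IsCovering S C)
    (hγ : γ ∈ C) (hz : z ∈ γ) (hx : x ∈ γ) (hzS : diagSucc z ∈ S)
    (hxz : BoxAdj x (diagSucc z)) : diagSucc x ∈ S := by
  have hH := hC.isHook_s10 hγ
  obtain ⟨δ, hδ, hzδ⟩ := hC.exists_mem_s10 hzS
  have hne : γ ≠ δ := by
    rintro rfl
    exact diagSucc_ne_self z (hH.eq_of_content_eq_s10 hzδ hz (content_diagSucc z))
  rcases hC.diagSucc_mem_or_diagSucc_mem hγ hδ hne hx hzδ hxz with h | h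
  · exact hC.subset hδ h
  · exact absurd (hH.eq_of_content_eq_s10 h hz (by simp)) (diagSucc_diagSucc_ne_self z)

lemma IsCovering.diagSucc_mem_iff_of_content_eq_add_one
    (hS : (S : Set (ℕ × ℕ)).OrdConnected) (hC : IsCovering S C) (hγ : γ ∈ C) (hx : x ∈ γ)
    (hy : y ∈ γ) (hxy : content y = content x + 1) : diagSucc x ∈ S ↔ diagSucc y ∈ S := by
  have hxS := hC.subset hγ hx
  have hyS := hC.subset hγ hy
  rcases (hC.isHook_s10 hγ).eq_or_eq_of_content_eq_add_one hx hy hxy with rfl | rfl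
  · refine ⟨fun h => hC.diagSucc_mem_of_boxAdj_diagSucc hγ hx hy h (Or.inr ⟨rfl, Or.inl rfl⟩),
      fun h => hS.mk_mem hyS h ⟨by simp, by simp [diagSucc]⟩ ⟨by simp, by simp [diagSucc]⟩⟩
  · refine ⟨fun h => hS.mk_mem hxS h ⟨by simp, by simp [diagSucc]⟩ ⟨by simp, by simp [diagSucc]⟩,
      fun h => hC.diagSucc_mem_of_boxAdj_diagSucc hγ hy hx h (Or.inl ⟨rfl, Or.inl rfl⟩)⟩

lemma IsCovering.diagSucc_mem_iff (hS : (S : Set (ℕ × ℕ)).OrdConnected) (hC : IsCovering S C)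
    (hγ : γ ∈ C) (hx : x ∈ γ) (hy : y ∈ γ) : diagSucc x ∈ S ↔ diagSucc y ∈ S := by
  have key : ∀ {a b}, a ∈ γ → b ∈ γ → content a ≤ content b →
      (diagSucc a ∈ S ↔ diagSucc b ∈ S) := fun {a b} ha hb hab =>
    (hC.isHook_s10 hγ).induction_on_content (P := fun b => diagSucc a ∈ S ↔ diagSucc b ∈ S) ha
      Iff.rfl (fun _ hu _ hv huv ih =>
        ih.trans (hC.diagSucc_mem_iff_of_content_eq_add_one hS hγ hu hv huv)) hb hab
  rcases le_total (content x) (content y) with h | h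
  · exact key hx hy h
  · exact (key hy hx h).symm

lemma IsCovering.mem_of_boxAdj_of_rim (hC : IsCovering S C) (hγ : γ ∈ C) (hx : x ∈ γ) (hy : y ∈ S)
    (hxy : BoxAdj x y) (hxS : diagSucc x ∉ S) (hyS : diagSucc y ∉ S) : y ∈ γ := by
  obtain ⟨δ, hδ, hyδ⟩ := hC.exists_mem_s10 hy
  by_contra hyγ
  have hne : γ ≠ δ := by rintro rfl; exact hyγ hyδ
  rcases hC.diagSucc_mem_or_diagSucc_mem hγ hδ hne hx hyδ hxy with h | h
  · exact hxS (hC.subset hδ h)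
  · exact hyS (hC.subset hγ h)

end Coverings

section Diagonals

variable {S : Finset (ℕ × ℕ)} {x y b : ℕ × ℕ} {c : ℤ}

def diagBoxes (S : Finset (ℕ × ℕ)) (c : ℤ) : Finset (ℕ × ℕ) := S.filter (content · = c)

def diagCard (S : Finset (ℕ × ℕ)) (c : ℤ) : ℕ := #(diagBoxes S c)

/-- The anticontent of the lowest box on the diagonal of content `c` (junk value `0` if the
diagonal is empty). -/
def bottomAnticontent (S : Finset (ℕ × ℕ)) (c : ℤ) : ℤ :=
  if h : (diagBoxes S c).Nonempty then (diagBoxes S c).sup' h anticontent else 0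

lemma mem_diagBoxes : x ∈ diagBoxes S c ↔ x ∈ S ∧ content x = c := mem_filter

lemma diagCard_pos : 0 < diagCard S c ↔ ∃ x ∈ S, content x = c := by
  simp [diagCard, card_pos, Finset.Nonempty, mem_diagBoxes]

lemma finite_support_diagCard (S : Finset (ℕ × ℕ)) : (Function.support (diagCard S)).Finite :=
  (S.image content).finite_toSet.subset fun c hc => by
    obtain ⟨x, hx, rfl⟩ := diagCard_pos.1 (Nat.pos_of_ne_zero hc)
    exact mem_coe.2 (mem_image_of_mem _ hx)

lemma bottomAnticontent_congr {T : Finset (ℕ × ℕ)} (h : diagBoxes S c = diagBoxes T c) :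
    bottomAnticontent S c = bottomAnticontent T c := by
  simp only [bottomAnticontent, h]

lemma bottomAnticontent_eq (hb : b ∈ S)
    (hmax : ∀ y ∈ S, content y = content b → anticontent y ≤ anticontent b) :
    bottomAnticontent S (content b) = anticontent b := by
  have hb' : b ∈ diagBoxes S (content b) := mem_diagBoxes.2 ⟨hb, rfl⟩
  rw [bottomAnticontent, dif_pos ⟨b, hb'⟩]
  exact le_antisymm (sup'_le _ _ fun y hy => hmax y (mem_diagBoxes.1 hy).1 (mem_diagBoxes.1 hy).2)
    (le_sup' _ hb')

lemma exists_diagSucc_not_mem (hx : x ∈ S) :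
    ∃ b ∈ S, content b = content x ∧ diagSucc b ∉ S := by
  obtain ⟨b, hb, hmax⟩ := (diagBoxes S (content x)).exists_max_image anticontent
    ⟨x, mem_diagBoxes.2 ⟨hx, rfl⟩⟩
  rw [mem_diagBoxes] at hb
  refine ⟨b, hb.1, hb.2, fun hds => ?_⟩
  have := hmax _ (mem_diagBoxes.2 ⟨hds, by rw [content_diagSucc, hb.2]⟩)
  rw [anticontent_diagSucc] at this
  omega

lemma anticontent_le_of_diagSucc_not_mem (hS : (S : Set (ℕ × ℕ)).OrdConnected) (hx : x ∈ S)
    (hxS : diagSucc x ∉ S) (hy : y ∈ S) (hc : content y = content x) :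
    anticontent y ≤ anticontent x := by
  by_contra! h
  simp only [content, anticontent] at hc h
  exact hxS (hS.mk_mem hx hy ⟨by omega, by omega⟩ ⟨by omega, by omega⟩)

lemma bottomAnticontent_eq_of_diagSucc_not_mem (hS : (S : Set (ℕ × ℕ)).OrdConnected)
    (hx : x ∈ S) (hxS : diagSucc x ∉ S) : bottomAnticontent S (content x) = anticontent x :=
  bottomAnticontent_eq hx fun _ hy hc => anticontent_le_of_diagSucc_not_mem hS hx hxS hy hc

lemma even_bottomAnticontent_sub (h : 0 < diagCard S c) : Even (bottomAnticontent S c - c) := by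
  obtain ⟨x, hx, rfl⟩ := diagCard_pos.1 h
  obtain ⟨b, hb, hmax⟩ := (diagBoxes S (content x)).exists_max_image anticontent
    ⟨x, mem_diagBoxes.2 ⟨hx, rfl⟩⟩
  obtain ⟨hbS, hbc⟩ := mem_diagBoxes.1 hb
  rw [← hbc, bottomAnticontent_eq hbS fun y hy hc => hmax y (mem_diagBoxes.2 ⟨hy, hc.trans hbc⟩)]
  exact ⟨b.1, by simp only [anticontent, content]; ring⟩

lemma boxAdj_of_diagSucc_not_mem (hS : (S : Set (ℕ × ℕ)).OrdConnected) (hx : x ∈ S) (hy : y ∈ S)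
    (hxS : diagSucc x ∉ S) (hyS : diagSucc y ∉ S) (hc : content y = content x + 1) :
    BoxAdj x y := by
  simp only [content] at hc
  unfold BoxAdj
  by_contra! h
  rcases lt_or_ge x.1 y.1 with hlt | hge
  · exact hxS (hS.mk_mem hx hy ⟨by omega, by omega⟩ ⟨by omega, by omega⟩)
  · exact hyS (hS.mk_mem hy hx ⟨by omega, by omega⟩ ⟨by omega, by omega⟩)

lemma bottomAnticontent_add_two (hS : (S : Set (ℕ × ℕ)).OrdConnected) (hx : x ∈ S)
    (htop : ∀ y ∈ S, content y = content x → anticontent x ≤ anticontent y) :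
    bottomAnticontent S (content x) + 2 = anticontent x + 2 * diagCard S (content x) := by
  obtain ⟨b, hb, hbc, hbS⟩ := exists_diagSucc_not_mem hx
  have hxb := htop b hb hbc
  have hdiag : diagBoxes S (content x) =
      (range (b.1 + 1 - x.1)).image fun k => (x.1 + k, x.2 + k) := by
    ext y
    simp only [mem_diagBoxes, mem_image, mem_range]
    constructor
    · rintro ⟨hy, hyc⟩
      have h1 := htop y hy hyc
      have h2 := anticontent_le_of_diagSucc_not_mem hS hb hbS hy (hyc.trans hbc.symm)
      simp only [content, anticontent] at hyc hbc h1 h2 hxb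
      exact ⟨y.1 - x.1, by omega, by ext <;> simp <;> omega⟩
    · rintro ⟨k, hk, rfl⟩
      simp only [content, anticontent] at hbc hxb
      exact ⟨hS.mk_mem hx hb ⟨by simp, by omega⟩ ⟨by simp, by omega⟩, by simp [content]⟩
  rw [← hbc, bottomAnticontent_eq_of_diagSucc_not_mem hS hb hbS, hbc, diagCard, hdiag,
    card_image_of_injective _ fun k k' h => by simpa using h, card_range]
  simp only [content, anticontent] at hbc hxb ⊢
  omega

lemma add_two_mul_diagCard_le (hS : (S : Set (ℕ × ℕ)).OrdConnected) {A : ℤ}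
    (hA : ∀ y ∈ S, content y = c → A ≤ anticontent y) (h : 0 < diagCard S c) :
    A + 2 * diagCard S c ≤ bottomAnticontent S c + 2 := by
  obtain ⟨x, hx, hmin⟩ := (diagBoxes S c).exists_min_image anticontent (card_pos.1 h)
  obtain ⟨hxS, rfl⟩ := mem_diagBoxes.1 hx
  rw [bottomAnticontent_add_two hS hxS fun y hy hc => hmin y (mem_diagBoxes.2 ⟨hy, hc⟩)]
  linarith [hA x hxS rfl]

end Diagonals

section Peeling

variable {S : Finset (ℕ × ℕ)} {C : Finset (Finset (ℕ × ℕ))} {x : ℕ × ℕ} {c : ℤ}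

def peelRim (S : Finset (ℕ × ℕ)) : Finset (ℕ × ℕ) := S.filter fun x => diagSucc x ∈ S

lemma mem_peelRim : x ∈ peelRim S ↔ x ∈ S ∧ diagSucc x ∈ S := mem_filter

lemma Set.OrdConnected.peelRim (hS : (S : Set (ℕ × ℕ)).OrdConnected) :
    ((peelRim S : Finset (ℕ × ℕ)) : Set (ℕ × ℕ)).OrdConnected := by
  refine ⟨fun x hx z hz y hy => ?_⟩
  simp only [mem_coe, mem_peelRim] at hx hz ⊢
  exact ⟨hS.out hx.1 hz.1 hy, hS.out hx.2 hz.2 ⟨diagSucc_mono hy.1, diagSucc_mono hy.2⟩⟩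

lemma diagBoxes_peelRim (hS : (S : Set (ℕ × ℕ)).OrdConnected) {b : ℕ × ℕ} (hb : b ∈ S)
    (hbS : diagSucc b ∉ S) :
    diagBoxes (peelRim S) (content b) = (diagBoxes S (content b)).erase b := by
  ext x
  simp only [mem_diagBoxes, mem_peelRim, mem_erase]
  constructor
  · rintro ⟨⟨hx, hxS⟩, hxc⟩
    exact ⟨by rintro rfl; exact hbS hxS, hx, hxc⟩
  · rintro ⟨hxb, hx, hxc⟩
    refine ⟨⟨hx, by_contra fun hxS => hxb ?_⟩, hxc⟩
    exact eq_of_content_eq_of_anticontent_eq hxc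
      (le_antisymm (anticontent_le_of_diagSucc_not_mem hS hb hbS hx hxc)
        (anticontent_le_of_diagSucc_not_mem hS hx hxS hb hxc.symm))

lemma diagCard_peelRim (hS : (S : Set (ℕ × ℕ)).OrdConnected) (c : ℤ) :
    diagCard (peelRim S) c = diagCard S c - 1 := by
  by_cases h : ∃ x ∈ S, content x = c
  · obtain ⟨x, hx, rfl⟩ := h
    obtain ⟨b, hb, hbc, hbS⟩ := exists_diagSucc_not_mem hx
    rw [diagCard, diagCard, ← hbc, diagBoxes_peelRim hS hb hbS,
      card_erase_of_mem (mem_diagBoxes.2 ⟨hb, rfl⟩)]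
  · have h' : ¬ ∃ x ∈ peelRim S, content x = c := fun ⟨x, hx, hxc⟩ =>
      h ⟨x, (mem_peelRim.1 hx).1, hxc⟩
    rw [Nat.eq_zero_of_not_pos (mt diagCard_pos.1 h), Nat.eq_zero_of_not_pos (mt diagCard_pos.1 h')]

lemma bottomAnticontent_peelRim (hS : (S : Set (ℕ × ℕ)).OrdConnected) (h : 2 ≤ diagCard S c) :
    bottomAnticontent (peelRim S) c = bottomAnticontent S c - 2 := by
  obtain ⟨x, hx, rfl⟩ := diagCard_pos.1 (by omega : 0 < diagCard S c)
  obtain ⟨b, hb, hbc, hbS⟩ := exists_diagSucc_not_mem hx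
  obtain ⟨y, hy, hyne⟩ := exists_mem_ne (by rwa [← diagCard]) b
  rw [mem_diagBoxes] at hy
  have hle := anticontent_le_of_diagSucc_not_mem hS hb hbS hy.1 (hy.2.trans hbc.symm)
  have hlt : anticontent y < anticontent b :=
    hle.lt_of_ne fun h => hyne (eq_of_content_eq_of_anticontent_eq (hy.2.trans hbc.symm) h)
  have hyb : y.1 < b.1 ∧ y.2 < b.2 := by
    have := hy.2.trans hbc.symm
    simp only [content, anticontent] at this hlt
    omega
  -- `y` lies strictly above `b` on their diagonal, so `b` has a diagonal predecessor in `S`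
  obtain ⟨b', rfl⟩ : ∃ b', diagSucc b' = b :=
    ⟨(b.1 - 1, b.2 - 1), by ext <;> simp [diagSucc] <;> omega⟩
  simp only [diagSucc] at hyb
  have hb' : b' ∈ peelRim S := mem_peelRim.2
    ⟨hS.mk_mem hy.1 hb ⟨by omega, by simp [diagSucc]⟩ ⟨by omega, by simp [diagSucc]⟩, hb⟩
  have hb'S : diagSucc b' ∉ peelRim S := fun h => hbS (mem_peelRim.1 h).2
  rw [content_diagSucc] at hbc
  rw [← hbc, bottomAnticontent_eq_of_diagSucc_not_mem hS.peelRim hb' hb'S,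
    ← content_diagSucc b', bottomAnticontent_eq_of_diagSucc_not_mem hS hb hbS, anticontent_diagSucc]
  ring

lemma IsCovering.filter_subset_peelRim (hS : (S : Set (ℕ × ℕ)).OrdConnected) (hC : IsCovering S C) :
    IsCovering (peelRim S) (C.filter (· ⊆ peelRim S)) := by
  refine ⟨fun γ hγ => hC.isHook_s10 (mem_filter.1 hγ).1, fun γ hγ => (mem_filter.1 hγ).2,
    fun x hx => ?_, fun γ hγ δ hδ => hC.2.2.2 γ (mem_filter.1 hγ).1 δ (mem_filter.1 hδ).1⟩
  obtain ⟨hxS, hxS'⟩ := mem_peelRim.1 hx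
  obtain ⟨γ, hγ, hxγ⟩ := hC.exists_mem_s10 hxS
  have hsub : γ ⊆ peelRim S := fun y hy =>
    mem_peelRim.2 ⟨hC.subset hγ hy, (hC.diagSucc_mem_iff hS hγ hxγ hy).1 hxS'⟩
  exact ⟨γ, ⟨mem_filter.2 ⟨hγ, hsub⟩, hxγ⟩,
    fun δ hδ => hC.eq_of_mem (mem_filter.1 hδ.1).1 hγ hδ.2 hxγ⟩

end Peeling

def HasGammaCovering (S : Finset (ℕ × ℕ)) : Prop :=
  ∃ C : Finset (Finset (ℕ × ℕ)), IsCovering S C ∧ ∀ γ ∈ C, InGammaZero γ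

lemma HasGammaCovering.peelRim {S : Finset (ℕ × ℕ)} (hS : (S : Set (ℕ × ℕ)).OrdConnected)
    (hG : HasGammaCovering S) : HasGammaCovering (peelRim S) := by
  obtain ⟨C, hC, hC0⟩ := hG
  exact ⟨_, hC.filter_subset_peelRim hS, fun γ hγ => hC0 γ (mem_filter.1 hγ).1⟩

def IsMaxRun (f : ℤ → ℕ) (k : ℕ) (l r : ℤ) : Prop :=
  l ≤ r ∧ (∀ c, l ≤ c → c ≤ r → k < f c) ∧ f (l - 1) ≤ k ∧ f (r + 1) ≤ k

lemma exists_isMaxRun {f : ℤ → ℕ} (hf : (Function.support f).Finite) {k : ℕ} {c : ℤ}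
    (hc : k < f c) : ∃ l r, l ≤ c ∧ c ≤ r ∧ IsMaxRun f k l r := by
  obtain ⟨lo, hlo⟩ := hf.bddBelow
  obtain ⟨hi, hhi⟩ := hf.bddAbove
  have hzero : ∀ x, (x < lo ∨ hi < x) → f x ≤ k := fun x hx => by
    by_contra! h
    have hx' : x ∈ Function.support f := Nat.pos_iff_ne_zero.1 (by omega)
    have := hlo hx'
    have := hhi hx'
    omega
  obtain ⟨g, ⟨hgc, hg⟩, hgmax⟩ := Int.exists_greatest_of_bdd (P := fun z => z ≤ c ∧ f z ≤ k)
    ⟨c, fun z hz => hz.1⟩ ⟨min (lo - 1) c, min_le_right _ _, hzero _ (Or.inl (by omega))⟩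
  obtain ⟨g', ⟨hcg', hg'⟩, hg'min⟩ := Int.exists_least_of_bdd (P := fun z => c ≤ z ∧ f z ≤ k)
    ⟨c, fun z hz => hz.1⟩ ⟨max (hi + 1) c, le_max_right _ _, hzero _ (Or.inr (by omega))⟩
  have hgc' : g < c := hgc.lt_of_ne (by rintro rfl; omega)
  have hcg'' : c < g' := hcg'.lt_of_ne (by rintro rfl; omega)
  refine ⟨g + 1, g' - 1, by omega, by omega, by omega, fun x h1 h2 => ?_, by simpa using hg,
    by simpa using hg'⟩
  by_contra! hx
  rcases le_or_gt x c with hxc | hxc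
  · exact absurd (hgmax x ⟨hxc, hx⟩) (by omega)
  · exact absurd (hg'min x ⟨hxc.le, hx⟩) (by omega)

lemma IsMaxRun.peel {S : Finset (ℕ × ℕ)} {k : ℕ} {l r : ℤ}
    (hS : (S : Set (ℕ × ℕ)).OrdConnected) (h : IsMaxRun (diagCard S) (k + 1) l r) :
    IsMaxRun (diagCard (peelRim S)) k l r := by
  obtain ⟨hlr, hrun, hl, hr⟩ := h
  simp only [IsMaxRun, diagCard_peelRim hS]
  exact ⟨hlr, fun c h1 h2 => by have := hrun c h1 h2; omega, by omega, by omega⟩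

section Runs

variable {S : Finset (ℕ × ℕ)} {C : Finset (Finset (ℕ × ℕ))} {γ : Finset (ℕ × ℕ)} {k : ℕ}
  {l r : ℤ}

lemma IsCovering.exists_mem_content_eq_of_rim (hS : (S : Set (ℕ × ℕ)).OrdConnected)
    (hC : IsCovering S C) (hγ : γ ∈ C) {x w : ℕ × ℕ} (hx : x ∈ γ) (hxS : diagSucc x ∉ S)
    (hw : w ∈ S) (hc : content w = content x + 1 ∨ content x = content w + 1) :
    ∃ z ∈ γ, content z = content w := by
  obtain ⟨b, hb, hbc, hbS⟩ := exists_diagSucc_not_mem hw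
  have hadj : BoxAdj x b := by
    rcases hc with hc | hc
    · exact boxAdj_of_diagSucc_not_mem hS (hC.subset hγ hx) hb hxS hbS (hbc.trans hc)
    · exact (boxAdj_of_diagSucc_not_mem hS hb (hC.subset hγ hx) hbS hxS (by rw [hbc, hc])).symm
  exact ⟨b, hC.mem_of_boxAdj_of_rim hγ hx hb hadj hxS hbS, hbc⟩

lemma IsCovering.exists_mem_content_eq_iff_of_isMaxRun (hS : (S : Set (ℕ × ℕ)).OrdConnected)
    (hC : IsCovering S C) (hγ : γ ∈ C) (hrim : ∀ y ∈ γ, diagSucc y ∉ S)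
    (h : IsMaxRun (diagCard S) 0 l r) {x : ℕ × ℕ} (hx : x ∈ γ) (hlx : l ≤ content x)
    (hxr : content x ≤ r) (c : ℤ) : (∃ y ∈ γ, content y = c) ↔ l ≤ c ∧ c ≤ r := by
  have hH := hC.isHook_s10 hγ
  have hempty : ∀ y ∈ γ, content y ≠ l - 1 ∧ content y ≠ r + 1 := fun y hy =>
    ⟨fun he => by linarith [h.2.2.1, diagCard_pos.2 ⟨y, hC.subset hγ hy, he⟩],
     fun he => by linarith [h.2.2.2, diagCard_pos.2 ⟨y, hC.subset hγ hy, he⟩]⟩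
  have hrange : ∀ y ∈ γ, l ≤ content y ∧ content y ≤ r := fun y hy => by
    by_contra! hy'
    by_cases hyl : content y < l
    · obtain ⟨z, hz, hzc⟩ := hH.exists_content_eq hy hx (c := l - 1) (by omega) (by omega)
      exact (hempty z hz).1 hzc
    · obtain ⟨z, hz, hzc⟩ := hH.exists_content_eq hx hy (c := r + 1) (by omega) (by omega)
      exact (hempty z hz).2 hzc
  obtain ⟨m, hm, hmin⟩ := γ.exists_min_image content ⟨x, hx⟩
  obtain ⟨t, ht, hmax⟩ := γ.exists_max_image content ⟨x, hx⟩
  have hml : content m = l := by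
    by_contra hml
    have := hrange m hm
    have := hmin x hx
    obtain ⟨w, hw, hwc⟩ := diagCard_pos.1 (h.2.1 (content m - 1) (by omega) (by omega))
    obtain ⟨z, hz, hzc⟩ :=
      hC.exists_mem_content_eq_of_rim hS hγ hm (hrim m hm) hw (Or.inr (by omega))
    linarith [hmin z hz]
  have htr : content t = r := by
    by_contra htr
    have := hrange t ht
    have := hmax x hx
    obtain ⟨w, hw, hwc⟩ := diagCard_pos.1 (h.2.1 (content t + 1) (by omega) (by omega))
    obtain ⟨z, hz, hzc⟩ := hC.exists_mem_content_eq_of_rim hS hγ ht (hrim t ht) hw (Or.inl hwc)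
    linarith [hmax z hz]
  exact ⟨fun ⟨y, hy, hyc⟩ => hyc ▸ hrange y hy,
    fun ⟨h1, h2⟩ => hH.exists_content_eq hm ht (hml ▸ h1) (htr ▸ h2)⟩

lemma IsMaxRun.bottomAnticontent_eq_and_le_of_zero (hS : (S : Set (ℕ × ℕ)).OrdConnected)
    (hG : HasGammaCovering S) (h : IsMaxRun (diagCard S) 0 l r) :
    bottomAnticontent S r = bottomAnticontent S l + 1 ∧
      ∀ c, l ≤ c → c ≤ r → bottomAnticontent S l ≤ bottomAnticontent S c := by
  obtain ⟨C, hC, hC0⟩ := hG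
  obtain ⟨x, hx, hxl⟩ := diagCard_pos.1 (h.2.1 l le_rfl h.1)
  obtain ⟨b, hb, hbl, hbS⟩ := exists_diagSucc_not_mem hx
  obtain ⟨γ, hγ, hbγ⟩ := hC.exists_mem_s10 hb
  have hrim : ∀ y ∈ γ, diagSucc y ∉ S := fun y hy => (hC.diagSucc_mem_iff hS hγ hy hbγ).not.2 hbS
  have hcont := hC.exists_mem_content_eq_iff_of_isMaxRun hS hγ hrim h hbγ (hbl.trans hxl).ge
    ((hbl.trans hxl).trans_le h.1)
  obtain ⟨m, hm, rfl⟩ := (hcont l).2 ⟨le_rfl, h.1⟩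
  obtain ⟨t, ht, rfl⟩ := (hcont r).2 ⟨h.1, le_rfl⟩
  have hmin : ∀ y ∈ γ, content m ≤ content y := fun y hy => ((hcont _).1 ⟨y, hy, rfl⟩).1
  have hmax : ∀ y ∈ γ, content y ≤ content t := fun y hy => ((hcont _).1 ⟨y, hy, rfl⟩).2
  have hbottom : ∀ y ∈ γ, bottomAnticontent S (content y) = anticontent y := fun y hy =>
    bottomAnticontent_eq_of_diagSucc_not_mem hS (hC.subset hγ hy) (hrim y hy)
  refine ⟨?_, fun c hlc hcr => ?_⟩
  · rw [hbottom t ht, hbottom m hm]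
    exact (hC0 γ hγ).anticontent_eq hm ht hmin hmax
  · obtain ⟨y, hy, rfl⟩ := (hcont c).2 ⟨hlc, hcr⟩
    rw [hbottom m hm, hbottom y hy]
    exact (hC0 γ hγ).2.2 m hm hmin y hy

theorem IsMaxRun.bottomAnticontent_eq_and_le (hS : (S : Set (ℕ × ℕ)).OrdConnected)
    (hG : HasGammaCovering S) (h : IsMaxRun (diagCard S) k l r) :
    bottomAnticontent S r = bottomAnticontent S l + 1 ∧
      ∀ c, l ≤ c → c ≤ r → bottomAnticontent S l ≤ bottomAnticontent S c := by
  induction k generalizing S with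
  | zero => exact h.bottomAnticontent_eq_and_le_of_zero hS hG
  | succ k ih =>
    obtain ⟨hr, hmin⟩ := ih hS.peelRim (hG.peelRim hS) (h.peel hS)
    have hpeel : ∀ c, l ≤ c → c ≤ r →
        bottomAnticontent (peelRim S) c = bottomAnticontent S c - 2 := fun c h1 h2 =>
      bottomAnticontent_peelRim hS (by have := h.2.1 c h1 h2; omega)
    have hl := hpeel l le_rfl h.1
    refine ⟨by linarith [hpeel r h.1 le_rfl], fun c h1 h2 => ?_⟩
    linarith [hmin c h1 h2, hpeel c h1 h2]

end Runs

def HasOddRuns (f : ℤ → ℕ) : Prop := ∀ k l r, IsMaxRun f k l r → Odd (r - l)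

lemma hasOddRuns_diagCard {S : Finset (ℕ × ℕ)} (hS : (S : Set (ℕ × ℕ)).OrdConnected)
    (hG : HasGammaCovering S) : HasOddRuns (diagCard S) := fun k l r h => by
  obtain ⟨a, ha⟩ := even_bottomAnticontent_sub ((Nat.zero_le k).trans_lt (h.2.1 l le_rfl h.1))
  obtain ⟨b, hb⟩ := even_bottomAnticontent_sub ((Nat.zero_le k).trans_lt (h.2.1 r h.1 le_rfl))
  exact ⟨a - b, by linarith [(h.bottomAnticontent_eq_and_le hS hG).1]⟩

section OddRuns

variable {f : ℤ → ℕ} {k : ℕ}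

lemma HasOddRuns.even_length (hf : HasOddRuns f) {l r : ℤ} (hlr : l ≤ r + 1)
    (hrun : ∀ c, l ≤ c → c ≤ r → k < f c) (hl : f (l - 1) ≤ k) (hr : f (r + 1) ≤ k) :
    Even (r + 1 - l) := by
  rcases hlr.eq_or_lt with rfl | hlr
  · exact ⟨0, by ring⟩
  · obtain ⟨a, ha⟩ := hf k l r ⟨by omega, hrun, hl, hr⟩
    exact ⟨a + 1, by omega⟩

/-- Removing `p` leaves two maximal intervals, each empty or of even length. -/
lemma HasOddRuns.even_sub_of_dip (hf : HasOddRuns f) {l p r : ℤ} (hlp : l ≤ p) (hpr : p ≤ r)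
    (hp : f p ≤ k) (hrun : ∀ c, l ≤ c → c ≤ r → c ≠ p → k < f c) (hl : f (l - 1) ≤ k)
    (hr : f (r + 1) ≤ k) : Even (r - l) := by
  obtain ⟨a, ha⟩ := hf.even_length (l := l) (r := p - 1) (by omega)
    (fun c h1 h2 => hrun c h1 (by omega) (by omega)) hl (by simpa using hp)
  obtain ⟨b, hb⟩ := hf.even_length (l := p + 1) (r := r) (by omega)
    (fun c h1 h2 => hrun c (by omega) h2 (by omega)) (by simpa using hp) hr
  exact ⟨a + b, by omega⟩

lemma HasOddRuns.eq_of_add_one {g : ℤ → ℕ} (hf : HasOddRuns f) (hg : HasOddRuns g)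
    (hgfin : (Function.support g).Finite) {c : ℤ}
    (hfg : ∀ x, x ≠ c - 1 → x ≠ c → f x = g x) (h1 : g (c - 1) = f (c - 1) + 1)
    (h0 : g c = f c + 1) : f (c - 1) = f c := by
  have key : ∀ p q, (p = c - 1 ∧ q = c ∨ p = c ∧ q = c - 1) → ¬ f p < f q := by
    rintro p q hpq hlt
    have hgp : g p = f p + 1 := by rcases hpq with ⟨rfl, -⟩ | ⟨rfl, -⟩ <;> assumption
    have hgq : g q = f q + 1 := by rcases hpq with ⟨-, rfl⟩ | ⟨-, rfl⟩ <;> assumption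
    obtain ⟨l, r, hlp, hpr, hlr, hrun, hl, hr⟩ := exists_isMaxRun hgfin (k := f p) (c := p)
      (by omega)
    have hlq : l ≤ q := by
      by_contra! h
      obtain rfl : q = l - 1 := by omega
      omega
    have hqr : q ≤ r := by
      by_contra! h
      obtain rfl : q = r + 1 := by omega
      omega
    refine Int.not_even_iff_odd.2 (hg _ _ _ ⟨hlr, hrun, hl, hr⟩) (hf.even_sub_of_dip hlp hpr
      le_rfl (fun x hx1 hx2 hxp => ?_) (by rw [hfg _ (by omega) (by omega)]; exact hl)
      (by rw [hfg _ (by omega) (by omega)]; exact hr))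
    by_cases hxq : x = q
    · subst hxq; exact hlt
    · rw [hfg x (by omega) (by omega)]; exact hrun x hx1 hx2
  rcases lt_trichotomy (f (c - 1)) (f c) with h | h | h
  · exact absurd h (key _ _ (Or.inl ⟨rfl, rfl⟩))
  · exact h
  · exact absurd h (key _ _ (Or.inr ⟨rfl, rfl⟩))

end OddRuns

section Domino

variable {S ν κ : Finset (ℕ × ℕ)} {i j : ℕ}

lemma diagBoxes_insert_of_ne {x : ℕ × ℕ} {c : ℤ} (h : content x ≠ c) :
    diagBoxes (insert x S) c = diagBoxes S c := by
  rw [diagBoxes, filter_insert, if_neg h, diagBoxes]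

lemma diagCard_insert {x : ℕ × ℕ} (hx : x ∉ S) :
    diagCard (insert x S) (content x) = diagCard S (content x) + 1 := by
  rw [diagCard, diagBoxes, filter_insert, if_pos rfl,
    card_insert_of_notMem fun h => hx (mem_filter.1 h).1, diagCard, diagBoxes]

lemma diagBoxes_domino_of_ne (hκν : κ = insert (i, j) (insert (i + 1, j) ν)) {c : ℤ}
    (h1 : c ≠ content (i, j) - 1) (h0 : c ≠ content (i, j)) : diagBoxes κ c = diagBoxes ν c := by
  rw [hκν, diagBoxes_insert_of_ne (Ne.symm h0),
    diagBoxes_insert_of_ne (by rw [content_below]; exact Ne.symm h1)]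

lemma diagCard_domino_top (hκν : κ = insert (i, j) (insert (i + 1, j) ν)) (h1 : (i, j) ∉ ν) :
    diagCard κ (content (i, j)) = diagCard ν (content (i, j)) + 1 := by
  rw [hκν, diagCard_insert (by simp [h1]), diagCard, diagCard,
    diagBoxes_insert_of_ne (by rw [content_below]; omega)]

lemma diagCard_domino_bottom (hκν : κ = insert (i, j) (insert (i + 1, j) ν))
    (h2 : (i + 1, j) ∉ ν) :
    diagCard κ (content (i, j) - 1) = diagCard ν (content (i, j) - 1) + 1 := by
  rw [hκν, ← content_below, diagCard, diagBoxes_insert_of_ne (by rw [content_below]; omega),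
    ← diagCard, diagCard_insert h2]

lemma domino_corner (hκ : (κ : Set (ℕ × ℕ)).OrdConnected)
    (hκν : κ = insert (i, j) (insert (i + 1, j) ν))
    (habove : ∀ b ∈ ν, ¬ (b.2 = j ∧ b.1 ≤ i + 1))
    (hleft : ∀ b ∈ ν, ¬ ((b.1 = i ∨ b.1 = i + 1) ∧ b.2 < j)) :
    ∀ x ∈ κ, x.1 ≤ i + 1 → j ≤ x.2 := by
  intro x hx hxi
  by_contra! hxj
  have hxν : x ∈ ν := by
    rw [hκν] at hx
    simp only [mem_insert, Prod.ext_iff] at hx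
    rcases hx with h | h | h
    · omega
    · omega
    · exact h
  rcases lt_or_ge x.1 i with hlt | hge
  · -- the box `(x.1, j)` lies between `x` and the upper domino box
    have hmem := hκ.mk_mem hx (hκν ▸ mem_insert_self _ _ : (i, j) ∈ κ) ⟨le_rfl, hlt.le⟩
      ⟨hxj.le, le_rfl⟩
    rw [hκν] at hmem
    simp only [mem_insert, Prod.ext_iff] at hmem
    rcases hmem with ⟨h, -⟩ | ⟨h, -⟩ | h
    · omega
    · omega
    · exact habove _ h ⟨rfl, by omega⟩
  · exact hleft x hxν ⟨by omega, hxj⟩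

lemma anticontent_add_le_of_corner (hcorner : ∀ x ∈ κ, x.1 ≤ i + 1 → j ≤ x.2) {e : ℕ}
    (he : e ≤ 2) {y : ℕ × ℕ} (hy : y ∈ κ) (hc : content y + e = content (i, j)) :
    anticontent (i, j) + e ≤ anticontent y := by
  simp only [content, anticontent] at hc ⊢
  by_contra! h
  have := hcorner y hy (by omega)
  omega

lemma diagCard_domino_eq (hκ : (κ : Set (ℕ × ℕ)).OrdConnected)
    (hν : (ν : Set (ℕ × ℕ)).OrdConnected) (hκG : HasGammaCovering κ) (hνG : HasGammaCovering ν)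
    (hκν : κ = insert (i, j) (insert (i + 1, j) ν)) (h1 : (i, j) ∉ ν) (h2 : (i + 1, j) ∉ ν) :
    diagCard ν (content (i, j) - 1) = diagCard ν (content (i, j)) :=
  (hasOddRuns_diagCard hν hνG).eq_of_add_one (hasOddRuns_diagCard hκ hκG)
    (finite_support_diagCard κ)
    (fun _ h1' h0' => by rw [diagCard, diagCard, diagBoxes_domino_of_ne hκν h1' h0'])
    (diagCard_domino_bottom hκν h2) (diagCard_domino_top hκν h1)

lemma bottomAnticontent_domino_top (hκ : (κ : Set (ℕ × ℕ)).OrdConnected)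
    (hκν : κ = insert (i, j) (insert (i + 1, j) ν)) (hcorner : ∀ x ∈ κ, x.1 ≤ i + 1 → j ≤ x.2) :
    bottomAnticontent κ (content (i, j)) + 2 =
      anticontent (i, j) + 2 * diagCard κ (content (i, j)) :=
  bottomAnticontent_add_two hκ (by simp [hκν]) fun y hy hc => by
    simpa using anticontent_add_le_of_corner hcorner (e := 0) (by norm_num) hy (by simpa using hc)

lemma bottomAnticontent_domino_bottom (hκ : (κ : Set (ℕ × ℕ)).OrdConnected)
    (hκν : κ = insert (i, j) (insert (i + 1, j) ν)) (hcorner : ∀ x ∈ κ, x.1 ≤ i + 1 → j ≤ x.2) :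
    bottomAnticontent κ (content (i, j) - 1) + 2 =
      anticontent (i, j) + 1 + 2 * diagCard κ (content (i, j) - 1) := by
  rw [← anticontent_below, ← content_below]
  exact bottomAnticontent_add_two hκ (by simp [hκν]) fun y hy hc => by
    rw [anticontent_below]
    exact_mod_cast anticontent_add_le_of_corner hcorner (e := 1) (by norm_num) hy
      (by rw [hc, content_below]; ring)

lemma le_bottomAnticontent_domino_left (hκ : (κ : Set (ℕ × ℕ)).OrdConnected)
    (hcorner : ∀ x ∈ κ, x.1 ≤ i + 1 → j ≤ x.2) (h : 0 < diagCard κ (content (i, j) - 2)) :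
    anticontent (i, j) + 2 + 2 * diagCard κ (content (i, j) - 2) ≤
      bottomAnticontent κ (content (i, j) - 2) + 2 :=
  add_two_mul_diagCard_le hκ (fun y hy hc =>
    anticontent_add_le_of_corner hcorner (e := 2) le_rfl hy (by rw [hc]; push_cast; ring)) h

lemma false_of_domino (hκ : (κ : Set (ℕ × ℕ)).OrdConnected)
    (hν : (ν : Set (ℕ × ℕ)).OrdConnected) (hκG : HasGammaCovering κ) (hνG : HasGammaCovering ν)
    (hκν : κ = insert (i, j) (insert (i + 1, j) ν)) (h1 : (i, j) ∉ ν) (h2 : (i + 1, j) ∉ ν)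
    (hcorner : ∀ x ∈ κ, x.1 ≤ i + 1 → j ≤ x.2)
    (heq : diagCard ν (content (i, j) - 1) = diagCard ν (content (i, j))) : False := by
  have hoff : ∀ x, x ≠ content (i, j) - 1 → x ≠ content (i, j) → diagBoxes κ x = diagBoxes ν x :=
    fun _ => diagBoxes_domino_of_ne hκν
  have hκc := diagCard_domino_top hκν h1
  have hκc1 := diagCard_domino_bottom hκν h2
  have htop := bottomAnticontent_domino_top hκ hκν hcorner
  have hbot := bottomAnticontent_domino_bottom hκ hκν hcorner
  have hleft := le_bottomAnticontent_domino_left hκ hcorner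
  generalize content (i, j) = c at *
  generalize diagCard ν c = n at *
  obtain ⟨l, r, hlc, hcr, hrun⟩ := exists_isMaxRun (finite_support_diagCard κ) (k := n)
    (by omega : n < diagCard κ c)
  have hl_ne : l ≠ c := fun h => by
    have := hrun.2.2.1
    rw [h] at this
    omega
  have hmin := (hrun.bottomAnticontent_eq_and_le hκ hκG).2 c hlc hcr
  rcases (show l ≤ c - 1 by omega).eq_or_lt with rfl | hl
  · omega
  -- the left end `l` also ends a maximal interval `[l, c - 2]` of `ν`
  have hνrun : IsMaxRun (diagCard ν) n l (c - 2) := by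
    refine ⟨by omega, fun x h h' => ?_, ?_, by rw [show c - 2 + 1 = c - 1 by ring, heq]⟩
    · rw [diagCard, ← hoff x (by omega) (by omega)]; exact hrun.2.1 x h (by omega)
    · rw [diagCard, ← hoff _ (by omega) (by omega)]; exact hrun.2.2.1
  have hν2 := (hνrun.bottomAnticontent_eq_and_le hν hνG).1
  have hlarge := hrun.2.1 (c - 2) (by omega) (by omega)
  have hlow := hleft ((Nat.zero_le n).trans_lt hlarge)
  rw [← bottomAnticontent_congr (hoff (c - 2) (by omega) (by omega)),
    ← bottomAnticontent_congr (hoff l (by omega) (by omega))] at hν2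
  omega

end Domino

theorem vertical_domino_not_both_gamma_general (ν κ : Finset (ℕ × ℕ)) (i j : ℕ)
    (h1 : (i, j) ∉ ν) (h2 : (i + 1, j) ∉ ν)
    (hκν : κ = insert (i, j) (insert (i + 1, j) ν))
    (habove : ∀ b ∈ ν, ¬ (b.2 = j ∧ b.1 ≤ i + 1))
    (hleft : ∀ b ∈ ν, ¬ ((b.1 = i ∨ b.1 = i + 1) ∧ b.2 < j)) :
    ¬ (InGamma κ ∧ InGamma ν) := by
  rintro ⟨⟨hκS, hκG⟩, ⟨hνS, hνG⟩⟩
  have hκ := hκS.ordConnected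
  have hν := hνS.ordConnected
  exact false_of_domino hκ hν hκG hνG hκν h1 h2 (domino_corner hκ hκν habove hleft)
    (diagCard_domino_eq hκ hν hκG hνG hκν h1 h2)

/-- If `κ` is obtained from the skew diagram `ν` by adding a vertical domino
with no box of `ν` above or to the left of either added box, then at most one
of `κ`, `ν` lies in `Γ`. -/
theorem vertical_domino_not_both_gamma (ν κ : Finset (ℕ × ℕ)) (i j : ℕ)
    (hν : IsSkew ν) (hκ : IsSkew κ)
    (h1 : (i, j) ∉ ν) (h2 : (i + 1, j) ∉ ν)
    (hκν : κ = insert (i, j) (insert (i + 1, j) ν))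
    (habove : ∀ b ∈ ν, ¬ (b.2 = j ∧ b.1 ≤ i + 1))
    (hleft : ∀ b ∈ ν, ¬ ((b.1 = i ∨ b.1 = i + 1) ∧ b.2 < j)) :
    ¬ (InGamma κ ∧ InGamma ν) :=
  vertical_domino_not_both_gamma_general ν κ i j h1 h2 hκν habove hleft
end

section
/- Let μ be a partition with weight diagram x_μ, and suppose flipping a wb pair at positions (l_w, l_b) with l_w < l_b (white at l_w, black at l_b) yields the weight diagram x_λ of a partition λ. Then λ ⊆ μ, μ/λ is a single connected rim hook γ, the height ht(γ) equals the number of black dots of x_μ in the interval [l_w, l_b], and wd(γ) = l_b − l_w − ht(γ) + 1; in particular the total number of boxes removed is l_b − l_w. -/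
open Finset

/-- The sequence `x_λ = (λ₁, λ₂ − 1, λ₃ − 2, …)` (indexed from `0`). -/
def xseq (μ : YoungDiagram) (k : ℕ) : ℤ := (μ.rowLen k : ℤ) - (k : ℤ)

/-- `lam` is obtained from `μ` by flipping the wb pair `(lw, lb)`:
`lw < lb`, `lw` is white and `lb` is black in `x_μ`, and the black set of
`x_lam` is that of `x_μ` with `lb` replaced by `lw`. -/
def IsFlip (μ lam : YoungDiagram) (lw lb : ℤ) : Prop :=
  lw < lb ∧ lw ∉ Set.range (xseq μ) ∧ lb ∈ Set.range (xseq μ) ∧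
    Set.range (xseq lam) = insert lw (Set.range (xseq μ) \ {lb})

/-- The number of black dots of `x_μ` in the interval `[a, b]`. -/
noncomputable def blackCount (μ : YoungDiagram) (a b : ℤ) : ℕ :=
  Nat.card {n : ℤ // n ∈ Set.Icc a b ∧ n ∈ Set.range (xseq μ)}

/-- The number of white dots of `x_μ` in the interval `[a, b]`. -/
noncomputable def whiteCount (μ : YoungDiagram) (a b : ℤ) : ℕ :=
  Nat.card {n : ℤ // n ∈ Set.Icc a b ∧ n ∉ Set.range (xseq μ)}

/-! The sequence `x_μ(i) = μ_i - i` is strictly decreasing, and such a sequence `ℕ → ℤ` is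
determined by its range, so the flip forces `x_λ`: if `x_μ(r) = l_b` and
`x_μ(s+1) < l_w < x_μ(s)`, then `x_λ(i) = x_μ(i+1)` for `r ≤ i < s`, `x_λ(s) = l_w`, and
`x_λ(i) = x_μ(i)` otherwise. A box `(i, j)` lies in `μ/λ` iff `x_λ(i) ≤ j - i < x_μ(i)`, so the
contents of `μ/λ` are exactly `[l_w, l_b)`, each once, row `i` carrying `[x_μ(i+1), x_μ(i))`.
Hence boxes of consecutive content are adjacent, the rows are `r, …, s` (one per black dot in
`[l_w, l_b]`), and the columns run from `λ_s = l_w + s` to `μ_r - 1 = l_b + r - 1`. -/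

theorem exists_succ_le_lt_of_le {α : Type*} [LinearOrder α] {f : ℕ → α} {c : α} {r n : ℕ}
    (hrn : r ≤ n) (hr : c < f r) (hn : f n ≤ c) : ∃ i, r ≤ i ∧ f (i + 1) ≤ c ∧ c < f i := by
  induction n, hrn using Nat.le_induction with
  | base => exact absurd hn hr.not_ge
  | succ n hrn ih =>
    by_cases hfn : f n ≤ c
    · exact ih hfn
    · exact ⟨n, hrn, hn, not_le.1 hfn⟩

theorem StrictAnti.apply_add_add_le {x : ℕ → ℤ} (hx : StrictAnti x) (r k : ℕ) :
    x (r + k) + k ≤ x r := by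
  induction k with
  | zero => simp
  | succ k ih =>
    have := hx (show r + k < r + (k + 1) by omega)
    push_cast
    omega

theorem StrictAnti.exists_succ_le_lt {x : ℕ → ℤ} (hx : StrictAnti x) {c : ℤ} {r : ℕ}
    (hr : c < x r) : ∃ i, r ≤ i ∧ x (i + 1) ≤ c ∧ c < x i := by
  have hdrop := hx.apply_add_add_le r (x r - c).toNat
  exact exists_succ_le_lt_of_le (Nat.le_add_right r (x r - c).toNat) hr (by omega)

theorem Antitone.eq_of_succ_le_lt {α : Type*} [Preorder α] {x : ℕ → α} (hx : Antitone x)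
    {c : α} {i j : ℕ} (hi : x (i + 1) ≤ c ∧ c < x i) (hj : x (j + 1) ≤ c ∧ c < x j) :
    i = j := by
  by_contra hne
  rcases Nat.lt_or_gt_of_ne hne with h | h
  · exact (hj.2.trans_le ((hx h).trans hi.1)).false
  · exact (hi.2.trans_le ((hx h).trans hj.1)).false

theorem StrictAnti.eq_or_succ_eq_of_succ_le_lt {x : ℕ → ℤ} (hx : StrictAnti x) {c : ℤ}
    {i j : ℕ} (hi : x (i + 1) ≤ c ∧ c < x i) (hj : x (j + 1) ≤ c + 1 ∧ c + 1 < x j) :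
    j = i ∨ j + 1 = i := by
  have hji : j ≤ i := by
    by_contra h
    have := hx.antitone (show i + 1 ≤ j by omega)
    omega
  have hij : i ≤ j + 1 := by
    by_contra h
    have := hx.antitone (show j + 2 ≤ i by omega)
    have := hx (show j + 1 < j + 2 by omega)
    omega
  omega

/-- `x_λ` when `x = x_μ` and the pair `(lw, lb)` is flipped: every black dot of `x` in `[lw, lb]`
slides down to the next black dot, the lowest one to `lw`. -/
def flipSeq (x : ℕ → ℤ) (lw lb : ℤ) (i : ℕ) : ℤ :=
  if lw ≤ x i ∧ x i ≤ lb then max (x (i + 1)) lw else x i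

section flipSeq

variable {x : ℕ → ℤ} {lw lb : ℤ}

theorem flipSeq_of_mem_Icc {i : ℕ} (hi : x i ∈ Set.Icc lw lb) :
    flipSeq x lw lb i = max (x (i + 1)) lw :=
  if_pos hi

theorem flipSeq_le (hx : Antitone x) (i : ℕ) : flipSeq x lw lb i ≤ x i := by
  have := hx (Nat.le_add_right i 1)
  unfold flipSeq
  split_ifs with h
  · exact max_le this h.1
  · exact le_rfl

theorem flipSeq_lt_iff (hx : StrictAnti x) (hw : lw ∉ Set.range x) {i : ℕ} :
    flipSeq x lw lb i < x i ↔ x i ∈ Set.Icc lw lb := by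
  have := hx (Nat.lt_add_one i)
  have hne : x i ≠ lw := fun h => hw ⟨i, h⟩
  unfold flipSeq
  split_ifs with h
  · exact iff_of_true (max_lt this (lt_of_le_of_ne h.1 hne.symm)) h
  · exact iff_of_false (lt_irrefl _) h

theorem strictAnti_flipSeq (hx : StrictAnti x) (hw : lw ∉ Set.range x) :
    StrictAnti (flipSeq x lw lb) := by
  refine strictAnti_nat_of_succ_lt fun i => ?_
  have h1 := hx (Nat.lt_add_one i)
  have h2 := hx (Nat.lt_add_one (i + 1))
  have hne : x (i + 1) ≠ lw := fun h => hw ⟨i + 1, h⟩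
  simp only [flipSeq]
  split_ifs <;> omega

theorem range_flipSeq (hx : StrictAnti x) (hw : lw ∉ Set.range x) (hb : lb ∈ Set.range x)
    (hlt : lw < lb) : Set.range (flipSeq x lw lb) = insert lw (Set.range x \ {lb}) := by
  obtain ⟨r, hr⟩ := hb
  ext v
  simp only [Set.mem_range, Set.mem_insert_iff, Set.mem_sdiff, Set.mem_singleton_iff]
  constructor
  · rintro ⟨i, rfl⟩
    have := hx (Nat.lt_add_one i)
    unfold flipSeq
    split_ifs with h
    · rcases max_choice (x (i + 1)) lw with hmax | hmax <;> rw [hmax]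
      · exact Or.inr ⟨⟨i + 1, rfl⟩, by linarith [h.2]⟩
      · exact Or.inl rfl
    · exact Or.inr ⟨⟨i, rfl⟩, fun hi => h ⟨by linarith, hi.le⟩⟩
  · rintro (rfl | ⟨⟨k, rfl⟩, hk⟩)
    · obtain ⟨s, hrs, hs⟩ := hx.exists_succ_le_lt (hr ▸ hlt : v < x r)
      refine ⟨s, ?_⟩
      rw [flipSeq_of_mem_Icc ⟨hs.2.le, hr ▸ hx.antitone hrs⟩]
      exact max_eq_right hs.1
    · by_cases hkI : lw ≤ x k ∧ x k ≤ lb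
      · have hrk : r < k := hx.lt_iff_gt.1 (hr ▸ lt_of_le_of_ne hkI.2 hk)
        obtain ⟨j, rfl⟩ := Nat.exists_eq_add_of_lt hrk
        have h1 := hx (Nat.lt_add_one (r + j))
        have h2 := hx.antitone (Nat.le_add_right r j)
        refine ⟨r + j, ?_⟩
        rw [flipSeq_of_mem_Icc ⟨by omega, by omega⟩]
        omega
      · exact ⟨k, if_neg hkI⟩

theorem flipSeq_le_lt_iff (hx : StrictAnti x) {r : ℕ} (hr : x r = lb) {c : ℤ}
    (hc : c ∈ Set.Ico lw lb) {i : ℕ} :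
    flipSeq x lw lb i ≤ c ∧ c < x i ↔ x (i + 1) ≤ c ∧ c < x i := by
  obtain ⟨hlw, hlb⟩ := hc
  unfold flipSeq
  split_ifs with h
  · omega
  · refine iff_of_false (fun h' => by omega) fun ⟨h1, h2⟩ => ?_
    have hir : i < r := hx.lt_iff_gt.1 (by omega)
    have := hx.antitone (show i + 1 ≤ r by omega)
    omega

theorem mem_Ico_of_flipSeq_le_lt {c : ℤ} {i : ℕ} (h : flipSeq x lw lb i ≤ c ∧ c < x i) :
    c ∈ Set.Ico lw lb := by
  unfold flipSeq at h
  split_ifs at h with hi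
  · exact ⟨by omega, by omega⟩
  · omega

end flipSeq

theorem StrictAnti.apply_mem_Icc_iff {x : ℕ → ℤ} (hx : StrictAnti x) {lw lb : ℤ} {r s i : ℕ}
    (hr : x r = lb) (hs : x (s + 1) < lw ∧ lw < x s) : x i ∈ Set.Icc lw lb ↔ i ∈ Set.Icc r s := by
  have hlw : lw ≤ x i ↔ i ≤ s := by
    constructor
    · intro h
      by_contra hc
      have := hx.antitone (show s + 1 ≤ i by omega)
      omega
    · intro h
      have := hx.antitone h
      omega
  rw [Set.mem_Icc, Set.mem_Icc, ← hr, hx.le_iff_ge, hlw, and_comm]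

theorem xseq_add_eq_rowLen (μ : YoungDiagram) (i : ℕ) : xseq μ i + i = μ.rowLen i := by
  simp [xseq]

theorem xseq_strictAnti (μ : YoungDiagram) : StrictAnti (xseq μ) :=
  strictAnti_nat_of_succ_lt fun k => by
    have := μ.rowLen_anti k (k + 1) (Nat.le_add_right k 1)
    unfold xseq
    omega

theorem YoungDiagram.exists_rowLen_succ_le_lt (μ : YoungDiagram) {j r : ℕ}
    (hr : j < μ.rowLen r) : ∃ i, r ≤ i ∧ μ.rowLen (i + 1) ≤ j ∧ j < μ.rowLen i := by
  have hzero : μ.rowLen (μ.colLen 0) = 0 := by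
    by_contra h
    exact lt_irrefl _ <| YoungDiagram.mem_iff_lt_colLen.1 <|
      YoungDiagram.mem_iff_lt_rowLen.2 (Nat.pos_of_ne_zero h)
  have := μ.rowLen_anti _ _ (Nat.le_add_left (μ.colLen 0) r)
  exact exists_succ_le_lt_of_le (Nat.le_add_right r (μ.colLen 0)) hr (by omega)

theorem blackCount_eq_ncard_preimage (μ : YoungDiagram) (a b : ℤ) :
    blackCount μ a b = (xseq μ ⁻¹' Set.Icc a b).ncard := by
  rw [← Set.ncard_image_of_injective _ (xseq_strictAnti μ).injective,
    Set.image_preimage_eq_inter_range]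
  rfl

theorem blackCount_eq_card_Icc {μ : YoungDiagram} {lw lb : ℤ} {r s : ℕ} (hr : xseq μ r = lb)
    (hs : xseq μ (s + 1) < lw ∧ lw < xseq μ s) : blackCount μ lw lb = (Finset.Icc r s).card := by
  rw [blackCount_eq_ncard_preimage, ← Set.ncard_coe_finset, Finset.coe_Icc]
  exact congrArg Set.ncard (Set.ext fun _ => (xseq_strictAnti μ).apply_mem_Icc_iff hr hs)

section Skew

variable {μ lam : YoungDiagram}

theorem mem_cells_sdiff_iff {i j : ℕ} :
    (i, j) ∈ μ.cells \ lam.cells ↔ xseq lam i ≤ content (i, j) ∧ content (i, j) < xseq μ i := by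
  simp only [Finset.mem_sdiff, YoungDiagram.mem_cells, YoungDiagram.mem_iff_lt_rowLen, xseq,
    content]
  omega

theorem exists_mem_cells_sdiff_of_content {i : ℕ} {c : ℤ} (h : xseq lam i ≤ c ∧ c < xseq μ i) :
    ∃ a ∈ μ.cells \ lam.cells, a.1 = i ∧ content a = c := by
  have hc : 0 ≤ c + i := by
    have := xseq_add_eq_rowLen lam i
    omega
  refine ⟨(i, (c + i).toNat), mem_cells_sdiff_iff.2 ?_, rfl, ?_⟩ <;> simp only [content] <;> omega

theorem mem_image_fst_cells_sdiff_iff {i : ℕ} :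
    i ∈ (μ.cells \ lam.cells).image Prod.fst ↔ xseq lam i < xseq μ i := by
  constructor
  · intro hi
    obtain ⟨⟨i, j⟩, ha, rfl⟩ := Finset.mem_image.1 hi
    obtain ⟨h1, h2⟩ := mem_cells_sdiff_iff.1 ha
    exact h1.trans_lt h2
  · intro h
    obtain ⟨a, ha, rfl, -⟩ := exists_mem_cells_sdiff_of_content ⟨le_rfl, h⟩
    exact Finset.mem_image_of_mem _ ha

theorem mem_image_snd_cells_sdiff_iff {j : ℕ} :
    j ∈ (μ.cells \ lam.cells).image Prod.snd ↔ ∃ i, lam.rowLen i ≤ j ∧ j < μ.rowLen i := by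
  simp only [Finset.mem_image, Finset.mem_sdiff, YoungDiagram.mem_cells,
    YoungDiagram.mem_iff_lt_rowLen, not_lt, Prod.exists]
  constructor
  · rintro ⟨i, j, ⟨h1, h2⟩, rfl⟩
    exact ⟨i, h2, h1⟩
  · rintro ⟨i, h1, h2⟩
    exact ⟨i, j, ⟨h2, h1⟩, rfl⟩

end Skew

theorem BoxAdj.symm_s14 {a b : ℕ × ℕ} (h : BoxAdj a b) : BoxAdj b a := by
  unfold BoxAdj at *
  omega

theorem isConnectedBoxes_of_image_content {S : Finset (ℕ × ℕ)} {lo hi : ℤ}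
    (hinj : Set.InjOn content S) (himage : S.image content = Finset.Ico lo hi)
    (hadj : ∀ a ∈ S, ∀ b ∈ S, content b = content a + 1 → BoxAdj a b) :
    IsConnectedBoxes S := by
  have hmem : ∀ a ∈ S, content a ∈ Finset.Ico lo hi := fun a ha =>
    himage ▸ Finset.mem_image_of_mem content ha
  have key : ∀ n : ℕ, ∀ a ∈ S, ∀ b ∈ S, content b = content a + n →
      Relation.ReflTransGen (fun x y => x ∈ S ∧ y ∈ S ∧ BoxAdj x y) a b ∧
      Relation.ReflTransGen (fun x y => x ∈ S ∧ y ∈ S ∧ BoxAdj x y) b a := by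
    intro n
    induction n with
    | zero =>
      intro a ha b hb h
      rw [hinj hb ha (by simpa using h)]
      exact ⟨.refl, .refl⟩
    | succ n ih =>
      intro a ha b hb h
      obtain ⟨d, hd, hdc⟩ : ∃ d ∈ S, content d = content a + n := by
        have ha' := Finset.mem_Ico.1 (hmem a ha)
        have hb' := Finset.mem_Ico.1 (hmem b hb)
        rw [← Finset.mem_image, himage, Finset.mem_Ico]
        push_cast at h
        omega
      have hdb := hadj d hd b hb (by push_cast at h; omega)
      obtain ⟨hab, hba⟩ := ih a ha d hd hdc
      exact ⟨hab.tail ⟨hd, hb, hdb⟩, hba.head ⟨hb, hd, hdb.symm_s14⟩⟩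
  intro a ha b hb
  rcases le_total (content a) (content b) with h | h
  · exact (key (content b - content a).toNat a ha b hb (by omega)).1
  · exact (key (content a - content b).toNat b hb a ha (by omega)).2

namespace IsFlip

variable {μ lam : YoungDiagram} {lw lb : ℤ}

theorem xseq_eq (h : IsFlip μ lam lw lb) : xseq lam = flipSeq (xseq μ) lw lb := by
  obtain ⟨hlt, hw, hb, hrange⟩ := h
  have hx := xseq_strictAnti μ
  have hdual := Set.range_injOn_strictMono (xseq_strictAnti lam).dual_right
    (strictAnti_flipSeq (lb := lb) hx hw).dual_right
    (by rw [Set.range_comp, Set.range_comp, hrange, range_flipSeq hx hw hb hlt])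
  exact funext fun i => congrFun hdual i

theorem le (h : IsFlip μ lam lw lb) : lam ≤ μ := by
  rw [← YoungDiagram.cells_subset_iff]
  rintro ⟨i, j⟩ hij
  have hle := flipSeq_le (lw := lw) (lb := lb) (xseq_strictAnti μ).antitone i
  rw [← h.xseq_eq] at hle
  simp only [YoungDiagram.mem_cells, YoungDiagram.mem_iff_lt_rowLen, xseq] at hij hle ⊢
  omega

theorem content_mem_Ico (h : IsFlip μ lam lw lb) {a : ℕ × ℕ} (ha : a ∈ μ.cells \ lam.cells) :
    content a ∈ Set.Ico lw lb := by
  rw [← Prod.mk.eta (p := a), mem_cells_sdiff_iff, h.xseq_eq] at ha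
  exact mem_Ico_of_flipSeq_le_lt ha

theorem mem_sdiff_iff (h : IsFlip μ lam lw lb) {i j : ℕ} (hc : content (i, j) ∈ Set.Ico lw lb) :
    (i, j) ∈ μ.cells \ lam.cells ↔
      xseq μ (i + 1) ≤ content (i, j) ∧ content (i, j) < xseq μ i := by
  obtain ⟨r, hr⟩ := h.2.2.1
  rw [mem_cells_sdiff_iff, h.xseq_eq, flipSeq_le_lt_iff (xseq_strictAnti μ) hr hc]

theorem injOn_content (h : IsFlip μ lam lw lb) :
    Set.InjOn content (μ.cells \ lam.cells : Finset (ℕ × ℕ)) := by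
  rintro ⟨i, j⟩ ha ⟨i', j'⟩ hb hab
  have hrow := (xseq_strictAnti μ).antitone.eq_of_succ_le_lt
    ((h.mem_sdiff_iff (h.content_mem_Ico ha)).1 ha)
    (hab ▸ (h.mem_sdiff_iff (h.content_mem_Ico hb)).1 hb)
  simp only [content] at hab
  ext <;> simp only <;> omega

theorem image_content (h : IsFlip μ lam lw lb) :
    (μ.cells \ lam.cells).image content = Finset.Ico lw lb := by
  ext c
  rw [Finset.mem_image, Finset.mem_Ico, ← Set.mem_Ico]
  refine ⟨fun ⟨a, ha, hac⟩ => hac ▸ h.content_mem_Ico ha, fun hc => ?_⟩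
  obtain ⟨r, hr⟩ := h.2.2.1
  obtain ⟨i, -, hi⟩ := (xseq_strictAnti μ).exists_succ_le_lt (hr ▸ hc.2)
  rw [← flipSeq_le_lt_iff (xseq_strictAnti μ) hr hc, ← h.xseq_eq] at hi
  obtain ⟨a, ha, -, hac⟩ := exists_mem_cells_sdiff_of_content hi
  exact ⟨a, ha, hac⟩

theorem boxAdj_of_content_eq_add_one (h : IsFlip μ lam lw lb) {a b : ℕ × ℕ}
    (ha : a ∈ μ.cells \ lam.cells) (hb : b ∈ μ.cells \ lam.cells)
    (hab : content b = content a + 1) : BoxAdj a b := by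
  obtain ⟨i, j⟩ := a
  obtain ⟨i', j'⟩ := b
  have hrow := (xseq_strictAnti μ).eq_or_succ_eq_of_succ_le_lt
    ((h.mem_sdiff_iff (h.content_mem_Ico ha)).1 ha)
    (hab ▸ (h.mem_sdiff_iff (h.content_mem_Ico hb)).1 hb)
  simp only [content] at hab
  unfold BoxAdj
  omega

theorem exists_last_row (h : IsFlip μ lam lw lb) {r : ℕ} (hr : xseq μ r = lb) :
    ∃ s, r ≤ s ∧ xseq μ (s + 1) < lw ∧ lw < xseq μ s := by
  obtain ⟨s, hrs, hs1, hs2⟩ := (xseq_strictAnti μ).exists_succ_le_lt (hr ▸ h.1)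
  exact ⟨s, hrs, lt_of_le_of_ne hs1 fun he => h.2.1 ⟨s + 1, he⟩, hs2⟩

theorem image_fst (h : IsFlip μ lam lw lb) {r s : ℕ} (hr : xseq μ r = lb)
    (hs : xseq μ (s + 1) < lw ∧ lw < xseq μ s) :
    (μ.cells \ lam.cells).image Prod.fst = Finset.Icc r s := by
  ext i
  rw [mem_image_fst_cells_sdiff_iff, h.xseq_eq, flipSeq_lt_iff (xseq_strictAnti μ) h.2.1,
    Finset.mem_Icc, ← Set.mem_Icc, (xseq_strictAnti μ).apply_mem_Icc_iff hr hs]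

theorem xseq_last (h : IsFlip μ lam lw lb) {r s : ℕ} (hr : xseq μ r = lb)
    (hs : xseq μ (s + 1) < lw ∧ lw < xseq μ s) (hrs : r ≤ s) : xseq lam s = lw := by
  rw [h.xseq_eq, flipSeq_of_mem_Icc ⟨hs.2.le, hr ▸ (xseq_strictAnti μ).antitone hrs⟩]
  exact max_eq_right hs.1.le

theorem image_snd (h : IsFlip μ lam lw lb) {r s : ℕ} (hr : xseq μ r = lb)
    (hs : xseq μ (s + 1) < lw ∧ lw < xseq μ s) (hrs : r ≤ s) :
    (μ.cells \ lam.cells).image Prod.snd = Finset.Ico (lam.rowLen s) (μ.rowLen r) := by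
  have hx := xseq_strictAnti μ
  have hlast := h.xseq_last hr hs hrs
  have := xseq_add_eq_rowLen lam s
  ext j
  rw [mem_image_snd_cells_sdiff_iff, Finset.mem_Ico]
  constructor
  · rintro ⟨i, h1, h2⟩
    have hi : i ∈ Finset.Icc r s := by
      rw [← h.image_fst hr hs, mem_image_fst_cells_sdiff_iff]
      have := xseq_add_eq_rowLen lam i
      have := xseq_add_eq_rowLen μ i
      omega
    rw [Finset.mem_Icc] at hi
    exact ⟨(lam.rowLen_anti _ _ hi.2).trans h1, h2.trans_le (μ.rowLen_anti _ _ hi.1)⟩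
  · rintro ⟨h1, h2⟩
    obtain ⟨i, hri, hi1, hi2⟩ := μ.exists_rowLen_succ_le_lt h2
    have his : i ≤ s := by
      by_contra hc
      have := μ.rowLen_anti _ _ (show s + 1 ≤ i by omega)
      have := xseq_add_eq_rowLen μ (s + 1)
      omega
    have hyi : xseq lam i = max (xseq μ (i + 1)) lw := by
      rw [h.xseq_eq, flipSeq_of_mem_Icc (hx.apply_mem_Icc_iff hr hs |>.2 ⟨hri, his⟩)]
    have := xseq_add_eq_rowLen lam i
    have := xseq_add_eq_rowLen μ (i + 1)
    exact ⟨i, by omega, hi2⟩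

theorem card_image_snd (h : IsFlip μ lam lw lb) {r s : ℕ} (hr : xseq μ r = lb)
    (hs : xseq μ (s + 1) < lw ∧ lw < xseq μ s) (hrs : r ≤ s) :
    (((μ.cells \ lam.cells).image Prod.snd).card : ℤ) = lb + r - (lw + s) := by
  have hlast := h.xseq_last hr hs hrs
  have := xseq_add_eq_rowLen lam s
  have := xseq_add_eq_rowLen μ r
  have hdrop := (xseq_strictAnti μ).apply_add_add_le r (s - r)
  rw [Nat.add_sub_cancel' hrs] at hdrop
  rw [h.image_snd hr hs hrs, Nat.card_Ico]
  omega

end IsFlip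

/-- Flipping a wb pair `(lw, lb)` of `x_μ` yields `λ ⊆ μ` with `μ/λ` a single
connected rim hook `γ`, whose height is the number of black dots of `x_μ` in
`[lw, lb]`, whose width is `lb − lw − ht(γ) + 1`, and whose size is `lb − lw`. -/
theorem flip_removes_rim_hook (μ lam : YoungDiagram) (lw lb : ℤ)
    (h : IsFlip μ lam lw lb) :
    lam ≤ μ ∧ IsHook (μ.cells \ lam.cells) ∧
      ht (μ.cells \ lam.cells) = blackCount μ lw lb ∧
      (wd (μ.cells \ lam.cells) : ℤ) = lb - lw - (ht (μ.cells \ lam.cells) : ℤ) + 1 ∧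
      ((μ.cells \ lam.cells).card : ℤ) = lb - lw := by
  obtain ⟨r, hr⟩ := h.2.2.1
  obtain ⟨s, hrs, hs⟩ := h.exists_last_row hr
  have hht : ht (μ.cells \ lam.cells) = s + 1 - r := by
    rw [ht, h.image_fst hr hs, Nat.card_Icc]
  refine ⟨h.le, ⟨⟨lam, μ, h.le, rfl⟩, ?_, ?_, fun a ha b hb => h.injOn_content ha hb⟩, ?_, ?_, ?_⟩
  · rw [← Finset.image_nonempty (f := content), h.image_content]
    exact Finset.nonempty_Ico.2 h.1
  · exact isConnectedBoxes_of_image_content h.injOn_content h.image_content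
      fun a ha b hb => h.boxAdj_of_content_eq_add_one ha hb
  · rw [hht, blackCount_eq_card_Icc hr hs, Nat.card_Icc]
  · rw [wd, h.card_image_snd hr hs hrs, hht]
    omega
  · rw [← Finset.card_image_of_injOn h.injOn_content, h.image_content, Int.card_Ico]
    have := h.1
    omega
end

section
/- Let μ be a partition, let p = (l_w, l_b) be a wb pair in x_μ whose flip yields x_λ for a partition λ, and let γ = μ/λ be the corresponding rim hook. Then p is an arrow pair (it satisfies the hw-condition and the d-condition) if and only if γ belongs to Γ₀ (it satisfies the HW-condition and the D-condition). -/
open Finset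

/-- An arrow pair of `x_μ`: a wb pair `(lw, lb)` such that (hw-condition) the
interval `[lw, lb]` contains exactly one more white than black dot, and
(d-condition) no interval `(lw, m]` with `m < lb` contains fewer white than
black dots. -/
def ArrowPair (μ : YoungDiagram) (lw lb : ℤ) : Prop :=
  lw < lb ∧ lw ∉ Set.range (xseq μ) ∧ lb ∈ Set.range (xseq μ) ∧
    whiteCount μ lw lb = blackCount μ lw lb + 1 ∧
    ∀ m : ℤ, lw < m → m < lb → blackCount μ (lw + 1) m ≤ whiteCount μ (lw + 1) m

/-!
On the Maya diagram, the diagonal of content `c` of `μ` ends in row `N(c) - 1`, where `N(c)` is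
the number of black dots to the right of `c`. Flipping `(lw, lb)` lowers `N` by one exactly on
`[lw, lb)`, so `μ/λ` consists of the last cells of the diagonals `c ∈ [lw, lb)`. Passing from `c`
to `c + 1` this cell moves one row up if `c + 1` is black and one column right if it is white, so
`μ/λ` is a connected ribbon whose rows and columns are counted by the black and white dots of
`[lw, lb]`, and the anticontent of its cell of content `m` exceeds that of its first cell by
`#white - #black` on `(lw, m]`. This turns HW into hw and D into d.
-/

theorem card_image_Ico_eq_card_filter_ne_add_one {α : Type*} [PartialOrder α] [DecidableEq α]
    {f : ℤ → α} (hf : Monotone f ∨ Antitone f) {a b : ℤ} (hab : a < b) :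
    #((Ico a b).image f) = #{c ∈ Ioo a b | f (c - 1) ≠ f c} + 1 := by
  induction b, hab using Int.leInduction with
  | base => simp [Ico_add_one_right_eq_Icc, Ioo_add_one_right_eq_Ioc]
  | succ b hab ih =>
    have hb : a ≤ b := by omega
    rw [← insert_Ico_right_eq_Ico_add_one hb, image_insert, Ioo_add_one_right_eq_Ioc,
      ← Ioo_insert_right hab, filter_insert]
    by_cases hjump : f (b - 1) = f b
    · have hmem : f b ∈ (Ico a b).image f :=
        mem_image.mpr ⟨b - 1, mem_Ico.mpr ⟨by omega, by omega⟩, hjump⟩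
      rw [if_neg (not_not.mpr hjump), insert_eq_of_mem hmem, ih]
    · have hnew : f b ∉ (Ico a b).image f := by
        simp only [mem_image, mem_Ico, not_exists, not_and]
        rintro c ⟨hac, hcb⟩ hfc
        have hc : c ≤ b - 1 := by omega
        refine hjump (le_antisymm ?_ ?_) <;> rcases hf with hf | hf
        all_goals first
          | exact hf (by omega : b - 1 ≤ b)
          | exact hfc ▸ hf hc
      rw [if_pos hjump, card_insert_of_notMem hnew, card_insert_of_notMem (by simp), ih]

theorem natCard_Icc_and_eq_card_filter (a b : ℤ) (P : ℤ → Prop) [DecidablePred P] :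
    Nat.card {n : ℤ // n ∈ Set.Icc a b ∧ P n} = #{n ∈ Icc a b | P n} := by
  rw [← Nat.card_eq_finsetCard]
  exact Nat.card_congr (Equiv.subtypeEquivRight fun n => by simp)

theorem card_filter_Icc_eq_card_filter_Ioo_add_one {a b : ℤ} (hab : a < b) (P : ℤ → Prop)
    [DecidablePred P] (hP : P a ↔ ¬P b) : #{n ∈ Icc a b | P n} = #{n ∈ Ioo a b | P n} + 1 := by
  rw [← Ioc_insert_left hab.le, ← Ioo_insert_right hab, filter_insert, filter_insert]
  by_cases ha : P a <;> simp [ha, hP.mp, hP.not_left.mp]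

theorem ncard_singleton_inter_Ioi (x c : ℤ) :
    ({x} ∩ Set.Ioi c).ncard = if c < x then 1 else 0 := by
  split_ifs with h
  · rw [Set.singleton_inter_of_mem (s := Set.Ioi c) h, Set.ncard_singleton]
  · rw [Set.singleton_inter_of_notMem (s := Set.Ioi c) h, Set.ncard_empty]

theorem boxAdj_comm {a b : ℕ × ℕ} : BoxAdj a b ↔ BoxAdj b a := by
  unfold BoxAdj
  omega

theorem whiteCount_add_blackCount (μ : YoungDiagram) (a b : ℤ) :
    whiteCount μ a b + blackCount μ a b = (b + 1 - a).toNat := by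
  classical
  rw [whiteCount, blackCount, natCard_Icc_and_eq_card_filter, natCard_Icc_and_eq_card_filter,
    add_comm, card_filter_add_card_filter_not, Int.card_Icc]

noncomputable def blacksAbove (μ : YoungDiagram) (c : ℤ) : ℕ :=
  (Set.range (xseq μ) ∩ Set.Ioi c).ncard

theorem finite_range_xseq_inter_Ioi (μ : YoungDiagram) (c : ℤ) :
    (Set.range (xseq μ) ∩ Set.Ioi c).Finite :=
  (Set.finite_Ioc c (xseq μ 0)).subset <| by
    rintro _ ⟨⟨i, rfl⟩, hc⟩
    exact ⟨hc, (xseq_strictAnti μ).antitone i.zero_le⟩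

theorem range_xseq_inter_Ioi (μ : YoungDiagram) (c : ℤ) :
    Set.range (xseq μ) ∩ Set.Ioi c = xseq μ '' {j | c < xseq μ j} := by
  ext n
  constructor
  · rintro ⟨⟨j, rfl⟩, hj⟩
    exact ⟨j, hj, rfl⟩
  · rintro ⟨j, hj, rfl⟩
    exact ⟨⟨j, rfl⟩, hj⟩

theorem lt_blacksAbove_iff {μ : YoungDiagram} {c : ℤ} {i : ℕ} :
    i < blacksAbove μ c ↔ c < xseq μ i := by
  have hinj := (xseq_strictAnti μ).injective
  have hfin : {j | c < xseq μ j}.Finite := Set.Finite.of_finite_image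
    (range_xseq_inter_Ioi μ c ▸ finite_range_xseq_inter_Ioi μ c) hinj.injOn
  rw [blacksAbove, range_xseq_inter_Ioi, Set.ncard_image_of_injective _ hinj]
  constructor
  · intro hi
    by_contra! hci
    have hsub : {j | c < xseq μ j} ⊆ Set.Iio i := fun j hj => by
      by_contra! hij
      exact (lt_of_lt_of_le hj ((xseq_strictAnti μ).antitone (not_lt.mp hij))).not_ge hci
    exact hi.not_ge (by simpa using Set.ncard_le_ncard hsub (Set.finite_Iio i))
  · intro hci
    have hsub : Set.Iic i ⊆ {j | c < xseq μ j} := fun j hj =>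
      lt_of_lt_of_le hci ((xseq_strictAnti μ).antitone hj)
    exact Nat.lt_of_succ_le (by simpa using Set.ncard_le_ncard hsub hfin)

theorem mem_cells_iff_lt_blacksAbove {μ : YoungDiagram} {p : ℕ × ℕ} :
    p ∈ μ.cells ↔ p.1 < blacksAbove μ (content p) := by
  rw [lt_blacksAbove_iff, YoungDiagram.mem_cells, ← Prod.mk.eta (p := p),
    YoungDiagram.mem_iff_lt_rowLen]
  simp only [xseq, content]
  omega

theorem blacksAbove_eq_blackCount_add {μ : YoungDiagram} {a b : ℤ} (hab : a ≤ b) :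
    blacksAbove μ a = blackCount μ (a + 1) b + blacksAbove μ b := by
  have hsplit : Set.range (xseq μ) ∩ Set.Ioi a =
      {n | n ∈ Set.Icc (a + 1) b ∧ n ∈ Set.range (xseq μ)} ∪ (Set.range (xseq μ) ∩ Set.Ioi b) := by
    ext n
    simp only [Set.mem_inter_iff, Set.mem_union, Set.mem_ofPred_eq, Set.mem_Icc, Set.mem_Ioi]
    by_cases hn : n ∈ Set.range (xseq μ)
    · simp only [hn, true_and, and_true]
      omega
    · simp only [hn, false_and, and_false, or_false]
  rw [blacksAbove, hsplit, Set.ncard_union_eq _ ((finite_range_xseq_inter_Ioi μ a).subset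
    (hsplit ▸ Set.subset_union_left)) (finite_range_xseq_inter_Ioi μ b)]
  · rfl
  · exact Set.disjoint_left.mpr fun n hn hn' => by
      simp only [Set.mem_ofPred_eq, Set.mem_Icc, Set.mem_inter_iff, Set.mem_Ioi] at hn hn'
      omega

theorem blacksAbove_sub_one_eq_add_ncard (μ : YoungDiagram) (c : ℤ) :
    blacksAbove μ (c - 1) = blacksAbove μ c + ({c} ∩ Set.range (xseq μ)).ncard := by
  have hsplit : Set.range (xseq μ) ∩ Set.Ioi (c - 1) =
      (Set.range (xseq μ) ∩ Set.Ioi c) ∪ ({c} ∩ Set.range (xseq μ)) := by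
    ext n
    simp only [Set.mem_inter_iff, Set.mem_Ioi, Set.mem_union, Set.mem_singleton_iff]
    constructor
    · rintro ⟨hn, hc⟩
      rcases (show c < n ∨ n = c by omega) with h | rfl
      · exact .inl ⟨hn, h⟩
      · exact .inr ⟨rfl, hn⟩
    · rintro (⟨hn, hc⟩ | ⟨rfl, hn⟩) <;> exact ⟨hn, by omega⟩
  rw [blacksAbove, hsplit, Set.ncard_union_eq _ (finite_range_xseq_inter_Ioi _ _) (Set.toFinite _),
    blacksAbove]
  exact Set.disjoint_left.mpr fun n hn hn' => (hn'.1 ▸ hn.2 : c < c).false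

theorem blacksAbove_sub_one_of_mem {μ : YoungDiagram} {c : ℤ} (h : c ∈ Set.range (xseq μ)) :
    blacksAbove μ (c - 1) = blacksAbove μ c + 1 := by
  rw [blacksAbove_sub_one_eq_add_ncard, Set.singleton_inter_of_mem h, Set.ncard_singleton]

theorem blacksAbove_sub_one_of_notMem {μ : YoungDiagram} {c : ℤ}
    (h : c ∉ Set.range (xseq μ)) : blacksAbove μ (c - 1) = blacksAbove μ c := by
  rw [blacksAbove_sub_one_eq_add_ncard, Set.singleton_inter_of_notMem h, Set.ncard_empty,
    add_zero]

theorem blacksAbove_le_sub_one (μ : YoungDiagram) (c : ℤ) :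
    blacksAbove μ c ≤ blacksAbove μ (c - 1) ∧ blacksAbove μ (c - 1) ≤ blacksAbove μ c + 1 := by
  by_cases h : c ∈ Set.range (xseq μ)
  · rw [blacksAbove_sub_one_of_mem h]; omega
  · rw [blacksAbove_sub_one_of_notMem h]; omega

theorem antitone_blacksAbove (μ : YoungDiagram) : Antitone (blacksAbove μ) :=
  antitone_int_of_succ_le fun c => by
    simpa using (blacksAbove_le_sub_one μ (c + 1)).1

theorem monotone_add_blacksAbove (μ : YoungDiagram) :
    Monotone fun c => c + (blacksAbove μ c : ℤ) :=
  monotone_int_of_le_succ fun c => by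
    have := (blacksAbove_le_sub_one μ (c + 1)).2
    simp only [add_sub_cancel_right] at this
    omega

theorem pos_blacksAbove_of_lt_mem {μ : YoungDiagram} {b c : ℤ}
    (hb : b ∈ Set.range (xseq μ)) (hc : c < b) : 0 < blacksAbove μ c := by
  obtain ⟨k, rfl⟩ := hb
  exact Nat.zero_lt_of_lt (lt_blacksAbove_iff.mpr hc)

/-- `c + blacksAbove μ c` counts the white dots `≤ c`, so it is positive from the first white
dot on. -/
theorem pos_add_blacksAbove_of_notMem_le {μ : YoungDiagram} {w c : ℤ}
    (hw : w ∉ Set.range (xseq μ)) (hc : w ≤ c) : 0 < c + (blacksAbove μ c : ℤ) := by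
  refine lt_of_lt_of_le ?_ (monotone_add_blacksAbove μ hc)
  show 0 < w + (blacksAbove μ w : ℤ)
  rcases lt_or_ge 0 w with hw0 | hw0
  · omega
  have hi : (-w).toNat < blacksAbove μ w := lt_blacksAbove_iff.mpr <| by
    have h1 : xseq μ (-w).toNat ≠ w := fun e => hw ⟨_, e⟩
    have h2 : w ≤ xseq μ (-w).toNat := by simp only [xseq]; omega
    omega
  omega

theorem blacksAbove_add_of_isFlip {μ lam : YoungDiagram} {lw lb : ℤ} (h : IsFlip μ lam lw lb)
    (c : ℤ) : blacksAbove lam c + (if c < lb then 1 else 0) =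
      blacksAbove μ c + (if c < lw then 1 else 0) := by
  obtain ⟨-, hw, hb, hrange⟩ := h
  have hne : lw ≠ lb := fun e => hw (e ▸ hb)
  have hsplit : (Set.range (xseq lam) ∩ Set.Ioi c) ∪ ({lb} ∩ Set.Ioi c) =
      (Set.range (xseq μ) ∩ Set.Ioi c) ∪ ({lw} ∩ Set.Ioi c) := by
    rw [← Set.union_inter_distrib_right, ← Set.union_inter_distrib_right, hrange]
    congr 1
    ext n
    by_cases hn : n = lb <;> by_cases hn' : n = lw <;> simp_all
  have hdisj {R : Set ℤ} {x : ℤ} (hx : x ∉ R) : Disjoint (R ∩ Set.Ioi c) ({x} ∩ Set.Ioi c) :=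
    Set.disjoint_left.mpr fun n hn hn' => hx (hn'.1 ▸ hn.1)
  have := congrArg Set.ncard hsplit
  rwa [Set.ncard_union_eq (hdisj ?_) (finite_range_xseq_inter_Ioi _ _) (Set.toFinite _),
    Set.ncard_union_eq (hdisj hw) (finite_range_xseq_inter_Ioi _ _) (Set.toFinite _),
    ncard_singleton_inter_Ioi, ncard_singleton_inter_Ioi] at this
  simpa [hrange] using hne.symm

/-- The last cell of the diagonal of content `c` in `μ`. -/
noncomputable def rimCell (μ : YoungDiagram) (c : ℤ) : ℕ × ℕ :=
  (blacksAbove μ c - 1, (c + blacksAbove μ c - 1).toNat)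

theorem rimCell_fst_snd_of_mem_Ico {μ : YoungDiagram} {lw lb c : ℤ} (hw : lw ∉ Set.range (xseq μ))
    (hb : lb ∈ Set.range (xseq μ)) (hc : c ∈ Finset.Ico lw lb) :
    ((rimCell μ c).1 : ℤ) = blacksAbove μ c - 1 ∧
      ((rimCell μ c).2 : ℤ) = c + blacksAbove μ c - 1 := by
  rw [Finset.mem_Ico] at hc
  have h1 := pos_blacksAbove_of_lt_mem hb hc.2
  have h2 := pos_add_blacksAbove_of_notMem_le hw hc.1
  simp only [rimCell]
  omega

theorem content_rimCell {μ : YoungDiagram} {lw lb c : ℤ} (hw : lw ∉ Set.range (xseq μ))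
    (hb : lb ∈ Set.range (xseq μ)) (hc : c ∈ Finset.Ico lw lb) : content (rimCell μ c) = c := by
  have := rimCell_fst_snd_of_mem_Ico hw hb hc
  simp only [content]
  omega

theorem sdiff_cells_eq_image_rimCell {μ lam : YoungDiagram} {lw lb : ℤ}
    (h : IsFlip μ lam lw lb) : μ.cells \ lam.cells = (Finset.Ico lw lb).image (rimCell μ) := by
  ext p
  simp only [Finset.mem_sdiff, mem_cells_iff_lt_blacksAbove, Finset.mem_image]
  constructor
  · rintro ⟨hμ, hlam⟩
    have hflip := blacksAbove_add_of_isFlip h (content p)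
    have hc : content p ∈ Finset.Ico lw lb := by
      rw [Finset.mem_Ico]
      constructor <;> by_contra <;> split_ifs at hflip <;> omega
    refine ⟨content p, hc, ?_⟩
    have := rimCell_fst_snd_of_mem_Ico h.2.1 h.2.2.1 hc
    rw [Finset.mem_Ico] at hc
    split_ifs at hflip <;> simp only [content] at * <;> ext <;> omega
  · rintro ⟨c, hc, rfl⟩
    have hflip := blacksAbove_add_of_isFlip h c
    have := rimCell_fst_snd_of_mem_Ico h.2.1 h.2.2.1 hc
    rw [content_rimCell h.2.1 h.2.2.1 hc]
    rw [Finset.mem_Ico] at hc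
    split_ifs at hflip <;> omega

theorem boxAdj_rimCell_add_one {μ : YoungDiagram} {lw lb c : ℤ} (hw : lw ∉ Set.range (xseq μ))
    (hb : lb ∈ Set.range (xseq μ)) (hc : lw ≤ c) (hc' : c + 1 < lb) :
    BoxAdj (rimCell μ c) (rimCell μ (c + 1)) := by
  have h := rimCell_fst_snd_of_mem_Ico hw hb (mem_Ico.mpr ⟨hc, by omega⟩ : c ∈ Ico lw lb)
  have h' := rimCell_fst_snd_of_mem_Ico hw hb (mem_Ico.mpr ⟨by omega, hc'⟩ : c + 1 ∈ Ico lw lb)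
  unfold BoxAdj
  by_cases hc1 : c + 1 ∈ Set.range (xseq μ)
  · have := blacksAbove_sub_one_of_mem hc1
    simp only [add_sub_cancel_right] at this
    omega
  · have := blacksAbove_sub_one_of_notMem hc1
    simp only [add_sub_cancel_right] at this
    omega

theorem isConnectedBoxes_image_rimCell {μ : YoungDiagram} {lw lb : ℤ}
    (hw : lw ∉ Set.range (xseq μ)) (hb : lb ∈ Set.range (xseq μ)) :
    IsConnectedBoxes ((Ico lw lb).image (rimCell μ)) := by
  set S := (Ico lw lb).image (rimCell μ)
  have hmem {c : ℤ} (hc : c ∈ Ico lw lb) : rimCell μ c ∈ S := mem_image_of_mem _ hc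
  have hchain : ∀ c ∈ Ico lw lb, Relation.ReflTransGen (fun x y => x ∈ S ∧ y ∈ S ∧ BoxAdj x y)
      (rimCell μ lw) (rimCell μ c) := by
    intro c hc
    obtain ⟨hlwc, hclb⟩ := mem_Ico.mp hc
    induction c, hlwc using Int.leInduction with
    | base => exact .refl
    | succ c hlwc ih =>
      refine (ih (mem_Ico.mpr ⟨hlwc, by omega⟩) (by omega)).tail ⟨hmem ?_, hmem hc, ?_⟩
      · exact mem_Ico.mpr ⟨hlwc, by omega⟩
      · exact boxAdj_rimCell_add_one hw hb hlwc hclb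
  have : Std.Symm fun x y => x ∈ S ∧ y ∈ S ∧ BoxAdj x y :=
    ⟨fun _ _ ⟨hx, hy, hxy⟩ => ⟨hy, hx, boxAdj_comm.mp hxy⟩⟩
  simp only [IsConnectedBoxes, S, forall_mem_image]
  exact fun a ha b hb => (Std.Symm.symm _ _ (hchain a ha)).trans (hchain b hb)

theorem isHook_sdiff_cells {μ lam : YoungDiagram} {lw lb : ℤ} (h : IsFlip μ lam lw lb) :
    IsHook (μ.cells \ lam.cells) := by
  obtain ⟨hlt, hw, hb, -⟩ := id h
  have hle : lam ≤ μ := YoungDiagram.cells_subset_iff.mp fun p hp => by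
    have := blacksAbove_add_of_isFlip h (content p)
    rw [mem_cells_iff_lt_blacksAbove] at hp ⊢
    split_ifs at this <;> omega
  refine ⟨⟨lam, μ, hle, rfl⟩, ?_⟩
  rw [sdiff_cells_eq_image_rimCell h]
  refine ⟨⟨_, mem_image_of_mem _ (mem_Ico.mpr ⟨le_rfl, hlt⟩)⟩,
    isConnectedBoxes_image_rimCell hw hb, ?_⟩
  simp only [forall_mem_image]
  intro a ha b hb' hab
  rw [content_rimCell hw hb ha, content_rimCell hw hb hb'] at hab
  rw [hab]

theorem ht_image_rimCell {μ : YoungDiagram} {lw lb : ℤ} (hlt : lw < lb)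
    (hw : lw ∉ Set.range (xseq μ)) (hb : lb ∈ Set.range (xseq μ)) :
    ht ((Ico lw lb).image (rimCell μ)) = blackCount μ lw lb := by
  classical
  have hanti : Antitone (Prod.fst ∘ rimCell μ) := fun _ _ h =>
    Nat.sub_le_sub_right (antitone_blacksAbove μ h) 1
  rw [ht, image_image, card_image_Ico_eq_card_filter_ne_add_one (.inr hanti) hlt, blackCount,
    natCard_Icc_and_eq_card_filter, card_filter_Icc_eq_card_filter_Ioo_add_one hlt _
      (iff_of_false hw (not_not.mpr hb))]
  congr 2
  refine filter_congr fun c hc => ?_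
  have hpos := pos_blacksAbove_of_lt_mem hb (mem_Ioo.mp hc).2
  simp only [Function.comp_apply, rimCell]
  by_cases hc' : c ∈ Set.range (xseq μ)
  · have := blacksAbove_sub_one_of_mem hc'
    simp only [hc', iff_true]
    omega
  · have := blacksAbove_sub_one_of_notMem hc'
    simp only [hc', iff_false, not_not]
    omega

theorem wd_image_rimCell {μ : YoungDiagram} {lw lb : ℤ} (hlt : lw < lb)
    (hw : lw ∉ Set.range (xseq μ)) (hb : lb ∈ Set.range (xseq μ)) :
    wd ((Ico lw lb).image (rimCell μ)) = whiteCount μ lw lb := by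
  classical
  have hmono : Monotone (Prod.snd ∘ rimCell μ) := fun _ _ h =>
    Int.toNat_le_toNat (Int.sub_le_sub_right (monotone_add_blacksAbove μ h) 1)
  rw [wd, image_image, card_image_Ico_eq_card_filter_ne_add_one (.inl hmono) hlt, whiteCount,
    natCard_Icc_and_eq_card_filter, card_filter_Icc_eq_card_filter_Ioo_add_one hlt _
      (iff_of_true hw (not_not.mpr hb))]
  congr 2
  refine filter_congr fun c hc => ?_
  have hpos := pos_add_blacksAbove_of_notMem_le hw (by linarith [(mem_Ioo.mp hc).1] : lw ≤ c - 1)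
  simp only [Function.comp_apply, rimCell]
  by_cases hc' : c ∈ Set.range (xseq μ)
  · have := blacksAbove_sub_one_of_mem hc'
    simp only [hc', not_true_eq_false, iff_false, not_not]
    omega
  · have := blacksAbove_sub_one_of_notMem hc'
    simp only [hc', not_false_eq_true, iff_true]
    omega

theorem dCond_image_rimCell_iff {μ : YoungDiagram} {lw lb : ℤ} (hlt : lw < lb)
    (hw : lw ∉ Set.range (xseq μ)) (hb : lb ∈ Set.range (xseq μ)) :
    DCond ((Ico lw lb).image (rimCell μ)) ↔
      ∀ m, lw < m → m < lb → blackCount μ (lw + 1) m ≤ whiteCount μ (lw + 1) m := by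
  have hlw : lw ∈ Ico lw lb := mem_Ico.mpr ⟨le_rfl, hlt⟩
  have hmin : DCond ((Ico lw lb).image (rimCell μ)) ↔
      ∀ c ∈ Ico lw lb, anticontent (rimCell μ lw) ≤ anticontent (rimCell μ c) := by
    simp only [DCond, forall_mem_image]
    constructor
    · refine fun hD => hD hlw fun c hc => ?_
      rw [content_rimCell hw hb hlw, content_rimCell hw hb hc]
      exact (mem_Ico.mp hc).1
    · intro hD c₀ hc₀ hc₀min
      have := hc₀min hlw
      rw [content_rimCell hw hb hlw, content_rimCell hw hb hc₀] at this
      rwa [le_antisymm this (mem_Ico.mp hc₀).1]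
  have hstep {m : ℤ} (hm : lw < m) (hm' : m < lb) :
      anticontent (rimCell μ lw) ≤ anticontent (rimCell μ m) ↔
        blackCount μ (lw + 1) m ≤ whiteCount μ (lw + 1) m := by
    have hcount := blacksAbove_eq_blackCount_add (μ := μ) hm.le
    have htotal := whiteCount_add_blackCount μ (lw + 1) m
    have h₀ := rimCell_fst_snd_of_mem_Ico hw hb hlw
    have h₁ := rimCell_fst_snd_of_mem_Ico hw hb (mem_Ico.mpr ⟨hm.le, hm'⟩)
    simp only [anticontent]
    omega
  rw [hmin]
  constructor
  · exact fun hD m hm hm' => (hstep hm hm').mp (hD m (mem_Ico.mpr ⟨hm.le, hm'⟩))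
  · intro hD m hm
    obtain ⟨hlwm, hmlb⟩ := mem_Ico.mp hm
    rcases hlwm.lt_or_eq with hlwm | rfl
    · exact (hstep hlwm hmlb).mpr (hD m hlwm hmlb)
    · exact le_rfl

/-- Let `γ = μ/λ` be the rim hook removed by flipping the wb pair `(lw, lb)` of
`x_μ`. Then `(lw, lb)` is an arrow pair iff `γ ∈ Γ₀`. -/
theorem arrowPair_iff_gammaZero (μ lam : YoungDiagram) (lw lb : ℤ)
    (h : IsFlip μ lam lw lb) :
    ArrowPair μ lw lb ↔ InGammaZero (μ.cells \ lam.cells) := by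
  obtain ⟨hlt, hw, hb, -⟩ := id h
  have hhook := isHook_sdiff_cells h
  rw [sdiff_cells_eq_image_rimCell h] at hhook ⊢
  simp only [ArrowPair, InGammaZero, ht_image_rimCell hlt hw hb, wd_image_rimCell hlt hw hb,
    dCond_image_rimCell_iff hlt hw hb]
  tauto
end

section
/- In the arrow diagram of any partition λ, any two distinct arrows either are nested (the source and target of one lie strictly between the source and target of the other), share the same source (white dot), or are disjoint with one arrow entirely to the left of the other; in particular, two arrows never cross. -/
open Finset

/-!
Let `β(x, y)` be the number of white minus the number of black dots in `[x, y]`; it is additive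
over adjacent intervals. For an arrow `(a, b)` the hw- and d-conditions say `β(a + 1, b) = 0` and
`β(a + 1, m) ≥ 0` for `a ≤ m < b`. If two arrows crossed, `a < c ≤ b ≤ d`, then `β(a + 1, c) ≥ 1`
because `c` is white, so `β(c + 1, b) ≤ -1`; this contradicts the d-condition of `(c, d)` at `b`,
or its hw-condition when `b = d`.
-/

namespace BlackDots

variable (B : Set ℤ)

noncomputable def balance (x y : ℤ) : ℤ :=
  ((Set.Icc x y ∩ Bᶜ).ncard : ℤ) - (Set.Icc x y ∩ B).ncard

lemma ncard_Icc_inter_add (s : Set ℤ) {x y z : ℤ} (hxy : x ≤ y + 1) (hyz : y ≤ z) :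
    (Set.Icc x y ∩ s).ncard + (Set.Icc (y + 1) z ∩ s).ncard = (Set.Icc x z ∩ s).ncard := by
  have hdisj : Disjoint (Set.Icc x y) (Set.Icc (y + 1) z) :=
    Set.disjoint_left.2 fun n hn hn' => by rw [Set.mem_Icc] at hn hn'; omega
  rw [← Set.ncard_union_eq (hdisj.mono Set.inter_subset_left Set.inter_subset_left),
    ← Set.union_inter_distrib_right]
  congr 2
  ext n
  simp only [Set.mem_union, Set.mem_Icc]
  omega

lemma balance_add {x y z : ℤ} (hxy : x ≤ y + 1) (hyz : y ≤ z) :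
    balance B x y + balance B (y + 1) z = balance B x z := by
  simp only [balance, ← ncard_Icc_inter_add _ hxy hyz]
  push_cast
  ring

lemma balance_self_of_notMem {x : ℤ} (hx : x ∉ B) : balance B x x = 1 := by
  simp [balance, hx]

lemma balance_of_lt {x y : ℤ} (h : y < x) : balance B x y = 0 := by
  simp [balance, Set.Icc_eq_empty_of_lt h]

structure IsArrow (a b : ℤ) : Prop where
  lt : a < b
  source_notMem : a ∉ B
  target_mem : b ∈ B
  balance_eq_zero : balance B (a + 1) b = 0
  balance_nonneg : ∀ m, a < m → m < b → 0 ≤ balance B (a + 1) m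

variable {B}

lemma IsArrow.balance_nonneg_of_le {a b m : ℤ} (h : IsArrow B a b) (ham : a ≤ m) (hmb : m ≤ b) :
    0 ≤ balance B (a + 1) m := by
  rcases ham.eq_or_lt with rfl | ham
  · exact (balance_of_lt B (lt_add_one a)).ge
  rcases hmb.eq_or_lt with rfl | hmb
  · exact h.balance_eq_zero.ge
  exact h.balance_nonneg m ham hmb

lemma IsArrow.not_cross {a b c d : ℤ} (h₁ : IsArrow B a b) (h₂ : IsArrow B c d)
    (hac : a < c) (hcb : c ≤ b) (hbd : b ≤ d) : False := by
  have hleft : 1 ≤ balance B (a + 1) c := by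
    have hsplit := balance_add B (x := a + 1) (y := c - 1) (z := c) (by omega) (by omega)
    rw [sub_add_cancel, balance_self_of_notMem B h₂.source_notMem] at hsplit
    have := h₁.balance_nonneg_of_le (m := c - 1) (by omega) (by omega)
    omega
  have hright : 0 ≤ balance B (c + 1) b := h₂.balance_nonneg_of_le hcb hbd
  have hsplit := balance_add B (x := a + 1) (by omega) hcb
  rw [h₁.balance_eq_zero] at hsplit
  omega

theorem IsArrow.noncrossing {a b c d : ℤ} (h₁ : IsArrow B a b) (h₂ : IsArrow B c d) :
    (c < a ∧ b < d) ∨ (a < c ∧ d < b) ∨ a = c ∨ b < c ∨ d < a := by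
  rcases lt_trichotomy a c with hac | rfl | hca
  · by_contra hcon
    exact h₁.not_cross h₂ hac (by omega) (by omega)
  · exact Or.inr (Or.inr (Or.inl rfl))
  · by_contra hcon
    exact h₂.not_cross h₁ hca (by omega) (by omega)

end BlackDots

open BlackDots

lemma balance_range_xseq (μ : YoungDiagram) (x y : ℤ) :
    balance (Set.range (xseq μ)) x y = (whiteCount μ x y : ℤ) - blackCount μ x y := by
  rw [balance, ← Nat.card_coe_set_eq, ← Nat.card_coe_set_eq]
  rfl

lemma ArrowPair.isArrow {μ : YoungDiagram} {a b : ℤ} (h : ArrowPair μ a b) :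
    IsArrow (Set.range (xseq μ)) a b := by
  obtain ⟨hab, ha, hb, hhw, hd⟩ := h
  refine ⟨hab, ha, hb, ?_, fun m ham hmb => ?_⟩
  · have hsplit := balance_add (Set.range (xseq μ)) (lt_add_one a).le hab.le
    rw [balance_self_of_notMem _ ha, balance_range_xseq μ a b, hhw] at hsplit
    push_cast at hsplit
    linarith
  · rw [balance_range_xseq]
    exact sub_nonneg.2 (mod_cast hd m ham hmb)

theorem arrows_noncrossing_general (μ : YoungDiagram) (a b c d : ℤ)
    (h₁ : ArrowPair μ a b) (h₂ : ArrowPair μ c d) :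
    (c < a ∧ b < d) ∨ (a < c ∧ d < b) ∨ a = c ∨ b < c ∨ d < a :=
  h₁.isArrow.noncrossing h₂.isArrow

/-- Any two distinct arrows in the arrow diagram of a partition either are
nested, share the same source, or are disjoint with one entirely to the left of
the other; in particular arrows never cross. -/
theorem arrows_noncrossing (μ : YoungDiagram) (a b c d : ℤ)
    (h₁ : ArrowPair μ a b) (h₂ : ArrowPair μ c d) (hne : (a, b) ≠ (c, d)) :
    (c < a ∧ b < d) ∨ (a < c ∧ d < b) ∨ a = c ∨ b < c ∨ d < a :=
  arrows_noncrossing_general μ a b c d h₁ h₂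
end
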